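/- arXiv:2107.03787 — 8 statements merged into one kernel-verified Lean document; each statement's English description precedes it below -/
import Mathlib

section
/- If G is a flasque inverse system of abelian groups indexed by a directed set of countable cofinality, then lim^1 G = 0; that is, every coherent element of G^{(1)} is trivial. -/
/-!
Flasqueness lets us lift along the cofinal sequence `μ`: choose `z n ∈ G (μ n)` with
`p (z (n + 1)) = z n + x (μ n, μ (n + 1))`. The cocycle identity upgrades this to
`p (z m) = z k + x (μ k, μ m)` for `k ≤ m`, so `y a := p (z k) - x (a, μ k)` does not depend on
the choice of `k` with `a ≤ μ k`; the cocycle identity once more gives `δ y = x`.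
-/

universe u v

/-- A `Λ`-inverse system of abelian groups. -/
structure InvSys (Λ : Type u) [Preorder Λ] : Type (max u (v + 1)) where
  G : Λ → Type v
  inst : ∀ a, AddCommGroup (G a)
  p : ∀ {a b : Λ}, a ≤ b → G b →+ G a
  p_refl : ∀ (a : Λ) (h : a ≤ a) (x : G a), p h x = x
  p_comp : ∀ {a b c : Λ} (hab : a ≤ b) (hbc : b ≤ c) (x : G c),
      p hab (p hbc x) = p (hab.trans hbc) x

attribute [instance] InvSys.inst

/-- `Λ^{(n)}`: the ≤-ordered `(n+1)`-tuples of `Λ`. -/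
def Tup (Λ : Type u) [Preorder Λ] (n : ℕ) : Type u :=
  {f : Fin (n + 1) → Λ // Monotone f}

variable {Λ : Type u} [Preorder Λ]

/-- `G^{(n)}`: functions assigning to each tuple `λ̄ ∈ Λ^{(n)}` an element of `G_{λ_0}`. -/
def InvSys.Cochain (S : InvSys.{u, v} Λ) (n : ℕ) : Type max u v :=
  ∀ t : Tup Λ n, S.G (t.1 0)

instance (S : InvSys.{u, v} Λ) (n : ℕ) : AddCommGroup (S.Cochain n) :=
  inferInstanceAs (AddCommGroup (∀ t : Tup Λ n, S.G (t.1 0)))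

/-- The tuple `λ̄^i` obtained by omitting the `i`-th coordinate. -/
def Tup.face {n : ℕ} (t : Tup Λ (n + 1)) (i : Fin (n + 2)) : Tup Λ n :=
  ⟨t.1 ∘ i.succAbove, t.2.comp (Fin.strictMono_succAbove i).monotone⟩

/-- The coboundary map `δ^{n+1} : G^{(n)} → G^{(n+1)}`,
`δ(x)_{λ̄} = Σ_{1≤i≤n+1} (-1)^i x_{λ̄^i} + p^{λ_1}_{λ_0}(x_{λ̄^0})`
(the `i = 0` term carries the bonding map `p^{λ_1}_{λ_0}`, and for `i ≥ 1` the bonding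
map `p^{λ_0}_{λ_0}` is the identity). -/
def InvSys.coboundary (S : InvSys.{u, v} Λ) (n : ℕ) (x : S.Cochain n) : S.Cochain (n + 1) :=
  fun t => ∑ i : Fin (n + 2),
    ((-1 : ℤ) ^ (i : ℕ)) • S.p (t.2 (Fin.zero_le (i.succAbove 0))) (x (t.face i))

namespace Tup

def pair {a b : Λ} (h : a ≤ b) : Tup Λ 1 :=
  ⟨![a, b], by
    intro i j hij
    fin_cases i <;> fin_cases j <;> first | exact le_rfl | exact h | exact absurd hij (by decide)⟩

def triple {a b c : Λ} (hab : a ≤ b) (hbc : b ≤ c) : Tup Λ 2 :=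
  ⟨![a, b, c], by
    intro i j hij
    fin_cases i <;> fin_cases j <;>
      first | exact le_rfl | exact hab | exact hbc | exact hab.trans hbc | exact absurd hij (by decide)⟩

theorem pair_eq (t : Tup Λ 1) : pair (t.2 (Fin.zero_le 1)) = t :=
  Subtype.ext (funext fun i => by fin_cases i <;> rfl)

variable {a b c : Λ} (hab : a ≤ b) (hbc : b ≤ c)

theorem triple_face_zero : (triple hab hbc).face 0 = pair hbc :=
  Subtype.ext (funext fun i => by fin_cases i <;> rfl)

theorem triple_face_one : (triple hab hbc).face 1 = pair (hab.trans hbc) :=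
  Subtype.ext (funext fun i => by fin_cases i <;> rfl)

theorem triple_face_two : (triple hab hbc).face 2 = pair hab :=
  Subtype.ext (funext fun i => by fin_cases i <;> rfl)

end Tup

namespace InvSys

variable (S : InvSys.{u, v} Λ)

def IsCocycle (c : ∀ ⦃a b : Λ⦄, a ≤ b → S.G a) : Prop :=
  ∀ ⦃a b d : Λ⦄ (hab : a ≤ b) (hbd : b ≤ d), c (hab.trans hbd) = c hab + S.p hab (c hbd)

variable {S}

theorem exists_seq_map_succ (hflasque : ∀ {a b : Λ} (h : a ≤ b), Function.Surjective (S.p h))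
    {μ : ℕ → Λ} (hμ : Monotone μ) (w : ∀ n, S.G (μ n)) :
    ∃ z : ∀ n, S.G (μ n), ∀ n, S.p (hμ n.le_succ) (z (n + 1)) = z n + w n := by
  choose lift hlift using fun {a b : Λ} (h : a ≤ b) => hflasque h
  exact ⟨fun n => Nat.rec 0 (fun k zk => lift (hμ k.le_succ) (zk + w k)) n, fun n => hlift _ _⟩

section Cocycle

variable {c : ∀ ⦃a b : Λ⦄, a ≤ b → S.G a} (hc : S.IsCocycle c)
include hc

theorem IsCocycle.apply_refl {a : Λ} (h : a ≤ a) : c h = 0 := by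
  have := hc h h
  rwa [S.p_refl, left_eq_add] at this

theorem IsCocycle.map_seq_of_le {μ : ℕ → Λ} (hμ : Monotone μ) {z : ∀ n, S.G (μ n)}
    (hz : ∀ n, S.p (hμ n.le_succ) (z (n + 1)) = z n + c (hμ n.le_succ)) {i j : ℕ} (hij : i ≤ j) :
    S.p (hμ hij) (z j) = z i + c (hμ hij) := by
  induction j, hij using Nat.le_induction with
  | base => rw [S.p_refl, hc.apply_refl, add_zero]
  | succ j hij ih =>
    calc S.p (hμ (hij.trans j.le_succ)) (z (j + 1))
        = S.p (hμ hij) (S.p (hμ j.le_succ) (z (j + 1))) := (S.p_comp _ _ _).symm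
      _ = z i + (c (hμ hij) + S.p (hμ hij) (c (hμ j.le_succ))) := by
          rw [hz, map_add, ih, add_assoc]
      _ = z i + c (hμ (hij.trans j.le_succ)) := by rw [← hc]

theorem IsCocycle.map_sub_eq_of_le {μ : ℕ → Λ} (hμ : Monotone μ) {z : ∀ n, S.G (μ n)}
    (hz : ∀ {i j} (hij : i ≤ j), S.p (hμ hij) (z j) = z i + c (hμ hij))
    {a : Λ} {k m : ℕ} (hkm : k ≤ m) (hak : a ≤ μ k) (ham : a ≤ μ m) :
    S.p ham (z m) - c ham = S.p hak (z k) - c hak := by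
  rw [← S.p_comp hak (hμ hkm), hz hkm, hc hak (hμ hkm), map_add]
  abel

theorem IsCocycle.map_sub_eq {μ : ℕ → Λ} (hμ : Monotone μ) {z : ∀ n, S.G (μ n)}
    (hz : ∀ {i j} (hij : i ≤ j), S.p (hμ hij) (z j) = z i + c (hμ hij))
    {a : Λ} {k m : ℕ} (hak : a ≤ μ k) (ham : a ≤ μ m) :
    S.p ham (z m) - c ham = S.p hak (z k) - c hak := by
  have hmax : a ≤ μ (max k m) := hak.trans (hμ (le_max_left k m))
  rw [← hc.map_sub_eq_of_le hμ hz (le_max_right k m) ham hmax,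
    hc.map_sub_eq_of_le hμ hz (le_max_left k m) hak hmax]

theorem IsCocycle.exists_map_sub_eq
    (hflasque : ∀ {a b : Λ} (h : a ≤ b), Function.Surjective (S.p h))
    {μ : ℕ → Λ} (hμ : Monotone μ) (hcof : ∀ a : Λ, ∃ i : ℕ, a ≤ μ i) :
    ∃ y : ∀ a, S.G a, ∀ ⦃a b : Λ⦄ (h : a ≤ b), S.p h (y b) - y a = c h := by
  obtain ⟨z, hz⟩ := exists_seq_map_succ hflasque hμ fun n => c (hμ n.le_succ)
  have hz_le {i j : ℕ} (hij : i ≤ j) := hc.map_seq_of_le hμ hz hij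
  choose k hk using hcof
  refine ⟨fun a => S.p (hk a) (z (k a)) - c (hk a), fun a b h => ?_⟩
  beta_reduce
  rw [hc.map_sub_eq hμ hz_le (h.trans (hk b)) (hk a), map_sub, S.p_comp, hc h (hk b)]
  abel

end Cocycle

theorem Cochain.map_apply_congr {n : ℕ} (x : S.Cochain n) {a : Λ} {t t' : Tup Λ n} (ht : t = t')
    (h : a ≤ t.1 0) (h' : a ≤ t'.1 0) : S.p h (x t) = S.p h' (x t') := by
  subst ht
  rfl

def Cochain.onPair (x : S.Cochain 1) {a b : Λ} (h : a ≤ b) : S.G a :=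
  x (Tup.pair h)

theorem Cochain.onPair_apply (x : S.Cochain 1) (t : Tup Λ 1) :
    x.onPair (t.2 (Fin.zero_le 1)) = x t :=
  calc x.onPair (t.2 (Fin.zero_le 1)) = S.p le_rfl (x.onPair (t.2 (Fin.zero_le 1))) :=
        (S.p_refl _ _ _).symm
    _ = S.p le_rfl (x t) := x.map_apply_congr t.pair_eq _ _
    _ = x t := S.p_refl _ _ _

theorem coboundary_one_apply_triple (x : S.Cochain 1) {a b c : Λ} (hab : a ≤ b) (hbc : b ≤ c) :
    S.coboundary 1 x (Tup.triple hab hbc)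
      = S.p hab (x.onPair hbc) - x.onPair (hab.trans hbc) + x.onPair hab := by
  have e0 := x.map_apply_congr (Tup.triple_face_zero hab hbc) hab hab
  have e1 := (x.map_apply_congr (Tup.triple_face_one hab hbc) le_rfl le_rfl).trans (S.p_refl _ _ _)
  have e2 := (x.map_apply_congr (Tup.triple_face_two hab hbc) le_rfl le_rfl).trans (S.p_refl _ _ _)
  simp only [coboundary, Fin.sum_univ_succ, Fin.sum_univ_zero, add_zero]
  erw [e0, e1, e2]
  change (1 : ℤ) • S.p hab (x.onPair hbc)
    + ((-1 : ℤ) ^ 1 • x.onPair (hab.trans hbc) + (-1 : ℤ) ^ 2 • x.onPair hab)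
    = S.p hab (x.onPair hbc) - x.onPair (hab.trans hbc) + x.onPair hab
  rw [one_smul, pow_one, neg_one_sq, one_smul, neg_one_smul]
  abel

theorem coboundary_zero_apply (f : ∀ a, S.G a) (t : Tup Λ 1) :
    S.coboundary 0 (fun s => f (s.1 0)) t = S.p (t.2 (Fin.zero_le 1)) (f (t.1 1)) - f (t.1 0) := by
  simp only [coboundary, Fin.sum_univ_succ, Fin.sum_univ_zero, add_zero]
  change (1 : ℤ) • S.p _ (f (t.1 1)) + (-1 : ℤ) ^ 1 • S.p (le_refl (t.1 0)) (f (t.1 0)) = _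
  rw [S.p_refl, one_smul, pow_one, neg_one_smul, ← sub_eq_add_neg]

theorem isCocycle_onPair_of_coboundary_eq_zero {x : S.Cochain 1} (hx : S.coboundary 1 x = 0) :
    S.IsCocycle fun _ _ h => x.onPair h := by
  intro a b d hab hbd
  have h : S.p hab (x.onPair hbd) - x.onPair (hab.trans hbd) + x.onPair hab = (0 : S.G a) :=
    (coboundary_one_apply_triple x hab hbd).symm.trans (congrFun hx _)
  rw [← sub_eq_zero, ← neg_eq_zero, ← h]
  abel

end InvSys

theorem lim_one_eq_zero_of_flasque_of_countable_cofinality_general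
    (S : InvSys.{u, v} Λ)
    (hflasque : ∀ {a b : Λ} (h : a ≤ b), Function.Surjective (S.p h))
    (μ : ℕ → Λ) (hμ : Monotone μ) (hcof : ∀ a : Λ, ∃ i : ℕ, a ≤ μ i)
    (x : S.Cochain 1) (hx : S.coboundary 1 x = 0) :
    ∃ y : S.Cochain 0, S.coboundary 0 y = x := by
  obtain ⟨y, hy⟩ :=
    (InvSys.isCocycle_onPair_of_coboundary_eq_zero hx).exists_map_sub_eq hflasque hμ hcof
  refine ⟨fun t => y (t.1 0), funext fun t => ?_⟩
  rw [InvSys.coboundary_zero_apply]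
  exact (hy _).trans (x.onPair_apply t)

theorem lim_one_eq_zero_of_flasque_of_countable_cofinality
    [IsDirected Λ (· ≤ ·)] (S : InvSys.{u, v} Λ)
    (hflasque : ∀ {a b : Λ} (h : a ≤ b), Function.Surjective (S.p h))
    (μ : ℕ → Λ) (hμ : Monotone μ) (hcof : ∀ a : Λ, ∃ i : ℕ, a ≤ μ i)
    (x : S.Cochain 1) (hx : S.coboundary 1 x = 0) :
    ∃ y : S.Cochain 0, S.coboundary 0 y = x :=
  lim_one_eq_zero_of_flasque_of_countable_cofinality_general S hflasque μ hμ hcof x hx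
end

section
/- For every n ≥ 0, if G is a flasque inverse system of abelian groups indexed by a directed set of cofinality ℵ_n, then lim^k G = 0 for all k ≥ n+1. -/
/-!
Restrict cochains to tuples with entries in a set `P ⊆ Λ`. If `P` has a greatest element `T`,
appending `T` to tuples is a contracting homotopy, so the restricted complex is exact. If `P`
is exhausted by an increasing well-ordered family `N i` on each of which the complex is exact,
and cocycles on `⋃ j < i, N j` extend to `N i`, Zorn's lemma glues compatible solutions into a
solution on `P`.

By induction on `n`, the complex is exact in degrees `≥ n + 1` on the lower closure of any
directed `D` with `#D ≤ ℵ_n`; `Λ` is such a lower closure, of a directed hull of a cofinal subset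
of size `ℵ_n`. For `n = 0` there is a cofinal chain `e 0 ≤ e 1 ≤ ⋯` in `D`; the
pieces `Iic (e i)` are cones, and `0`-cocycles extend from `Iic (e i)` to `Iic (e (i + 1))`
because the system is flasque. For `n + 1`, index `D` by `ω_{n+1}` and let `N i` be the lower
closure of a directed hull of the elements of index `≤ i`; these hulls have size `≤ ℵ_n`, so the
induction hypothesis gives exactness on `N i`, and exactness one degree lower on `⋃ j < i, N j`
makes every cocycle there the restriction of a global coboundary.
-/

universe u v

variable {Λ : Type u} [Preorder Λ]

/-- The cofinality of a directed set: the least cardinality of a cofinal subset. -/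
noncomputable def cofinality (Λ : Type u) [Preorder Λ] : Cardinal.{u} :=
  sInf {c : Cardinal.{u} | ∃ C : Set Λ, (∀ a : Λ, ∃ b ∈ C, a ≤ b) ∧ Cardinal.mk C = c}

theorem Fin.succ_succAbove_succAbove {n : ℕ} {i j : Fin (n + 2)} (h : i ≤ j) (k : Fin (n + 1)) :
    j.succ.succAbove (i.succAbove k) = i.castSucc.succAbove (j.succAbove k) :=
  congrArg (fun f => f.toOrderHom k) (SimplexCategory.δ_comp_δ h)

theorem Fin.sum_sum_eq_zero_of_add_eq_zero {M : Type*} [AddCommMonoid M] {n : ℕ}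
    (g : Fin (n + 3) → Fin (n + 2) → M)
    (hg : ∀ i j : Fin (n + 2), i ≤ j → g j.succ i + g i.castSucc j = 0) :
    ∑ a, ∑ b, g a b = 0 := by
  rw [← Finset.sum_product']
  let σ : Fin (n + 3) × Fin (n + 2) → Fin (n + 3) × Fin (n + 2) := fun p =>
    if h : (p.1 : ℕ) ≤ p.2 then (p.2.succ, ⟨p.1, by omega⟩)
    else (p.2.castSucc, ⟨p.1 - 1, by omega⟩)
  have hσ₁ {i j : Fin (n + 2)} (h : i ≤ j) : σ (i.castSucc, j) = (j.succ, i) :=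
    dif_pos (Fin.le_def.1 h)
  have hσ₂ {i j : Fin (n + 2)} (h : i ≤ j) : σ (j.succ, i) = (i.castSucc, j) := by
    rw [Fin.le_def] at h
    simp only [σ, Fin.val_succ, dif_neg (show ¬ (j : ℕ) + 1 ≤ i by omega)]
    rfl
  have hsplit (p : Fin (n + 3) × Fin (n + 2)) :
      ∃ i j, i ≤ j ∧ (p = (i.castSucc, j) ∨ p = (j.succ, i)) := by
    obtain ⟨a, b⟩ := p
    by_cases h : (a : ℕ) ≤ b
    · exact ⟨⟨a, by omega⟩, b, Fin.le_def.2 h, .inl rfl⟩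
    · refine ⟨b, ⟨a - 1, by omega⟩, Fin.le_def.2 (by simp only; omega), .inr ?_⟩
      ext <;> simp only [Fin.val_succ]; omega
  refine Finset.sum_ninvolution σ (fun p => ?_) (fun p _ => ?_) (fun _ => Finset.mem_univ _)
    (fun p => ?_) <;> obtain ⟨i, j, h, rfl | rfl⟩ := hsplit p
  · rw [hσ₁ h, add_comm, hg i j h]
  · rw [hσ₂ h, hg i j h]
  · rw [hσ₁ h]; exact fun he => (Fin.castSucc_lt_succ_iff.2 h).ne' (congrArg Prod.fst he)
  · rw [hσ₂ h]; exact fun he => (Fin.castSucc_lt_succ_iff.2 h).ne (congrArg Prod.fst he)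
  · rw [hσ₁ h, hσ₂ h]
  · rw [hσ₂ h, hσ₁ h]

theorem Tup.zero_le_face {n : ℕ} (t : Tup Λ (n + 1)) (i : Fin (n + 2)) :
    t.1 0 ≤ (t.face i).1 0 :=
  t.2 (Fin.zero_le _)

theorem Tup.face_last_le {n : ℕ} (t : Tup Λ (n + 1)) (i : Fin (n + 2)) :
    (t.face i).1 (Fin.last n) ≤ t.1 (Fin.last (n + 1)) :=
  t.2 (Fin.le_last _)

theorem Tup.range_face_subset {n : ℕ} (t : Tup Λ (n + 1)) (i : Fin (n + 2)) :
    Set.range (t.face i).1 ⊆ Set.range t.1 :=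
  Set.range_comp_subset_range i.succAbove t.1

theorem Tup.face_face {n : ℕ} (t : Tup Λ (n + 2)) {i j : Fin (n + 2)} (h : i ≤ j) :
    (t.face j.succ).face i = (t.face i.castSucc).face j :=
  Subtype.ext <| funext fun k => congrArg t.1 (Fin.succ_succAbove_succAbove h k)

def Tup.snoc {n : ℕ} (t : Tup Λ n) (a : Λ) (ha : t.1 (Fin.last n) ≤ a) : Tup Λ (n + 1) :=
  ⟨Fin.snoc t.1 a, by simpa [Fin.insertNth_last'] using Fin.insertNth_last_monotone t.2 a ha⟩

theorem Tup.snoc_zero {n : ℕ} (t : Tup Λ n) (a : Λ) (ha : t.1 (Fin.last n) ≤ a) :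
    (t.snoc a ha).1 0 = t.1 0 :=
  Fin.snoc_castSucc (α := fun _ => Λ) (i := 0) a t.1

theorem Tup.range_snoc {n : ℕ} (t : Tup Λ n) (a : Λ) (ha : t.1 (Fin.last n) ≤ a) :
    Set.range (t.snoc a ha).1 = insert a (Set.range t.1) :=
  Fin.range_snoc ..

theorem Tup.snoc_face_last {n : ℕ} (t : Tup Λ n) (a : Λ) (ha : t.1 (Fin.last n) ≤ a) :
    (t.snoc a ha).face (Fin.last (n + 1)) = t :=
  Subtype.ext <| funext fun k => by simp [Tup.face, Tup.snoc]

theorem Tup.snoc_face_castSucc {n : ℕ} (t : Tup Λ (n + 1)) (a : Λ)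
    (ha : t.1 (Fin.last (n + 1)) ≤ a) (i : Fin (n + 2)) (ha' : (t.face i).1 (Fin.last n) ≤ a) :
    (t.snoc a ha).face i.castSucc = (t.face i).snoc a ha' := by
  refine Subtype.ext <| funext fun k => ?_
  induction k using Fin.lastCases with
  | last => simp [Tup.face, Tup.snoc]
  | cast k => simp [Tup.face, Tup.snoc, Fin.castSucc_succAbove_castSucc]

def Tup.pt (a : Λ) : Tup Λ 0 :=
  ⟨fun _ => a, monotone_const⟩

theorem Tup.eq_pt (s : Tup Λ 0) : s = Tup.pt (s.1 0) :=
  Subtype.ext <| funext fun k => congrArg s.1 (Fin.eq_zero k)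

def Tup.pair_s2 {a b : Λ} (h : a ≤ b) : Tup Λ 1 :=
  (Tup.pt a).snoc b h

theorem Tup.range_pair {a b : Λ} (h : a ≤ b) : Set.range (Tup.pair_s2 h).1 = {b, a} :=
  ((Tup.pt a).range_snoc b h).trans (congrArg (insert b) Set.range_const)

theorem Tup.pair_face_zero {a b : Λ} (h : a ≤ b) : (Tup.pair_s2 h).face 0 = Tup.pt b :=
  Subtype.ext <| funext fun k => by
    rw [Fin.eq_zero k]; exact Fin.snoc_last (α := fun _ => Λ) b (Tup.pt a).1

theorem Tup.pair_face_one {a b : Λ} (h : a ≤ b) : (Tup.pair_s2 h).face 1 = Tup.pt a :=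
  (Tup.pt a).snoc_face_last b h

theorem Tup.exists_range_subset {ι : Type*} {M : ι → Set Λ} (hM : Directed (· ⊆ ·) M)
    {n : ℕ} {t : Tup Λ n} (ht : Set.range t.1 ⊆ ⋃ i, M i) : ∃ i, Set.range t.1 ⊆ M i := by
  choose g hg using fun r => Set.mem_iUnion.1 (ht ⟨r, rfl⟩)
  have : Nonempty ι := ⟨g 0⟩
  obtain ⟨i, hi⟩ := hM.finite_le g
  exact ⟨i, Set.range_subset_iff.2 fun r => hi r (hg r)⟩

namespace DirectedOn

variable {α : Type u} {r : α → α → Prop} {D : Set α}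

open Classical in
noncomputable def ub (hD : DirectedOn r D) (a b : α) : α :=
  if h : a ∈ D ∧ b ∈ D then (hD a h.1 b h.2).choose else a

theorem ub_spec (hD : DirectedOn r D) {a b : α} (ha : a ∈ D) (hb : b ∈ D) :
    hD.ub a b ∈ D ∧ r a (hD.ub a b) ∧ r b (hD.ub a b) := by
  rw [ub, dif_pos ⟨ha, hb⟩]
  exact (hD a ha b hb).choose_spec

def hullStep (hD : DirectedOn r D) (B : Set α) : Set α :=
  B ∪ Set.image2 hD.ub B B

def hull (hD : DirectedOn r D) (A : Set α) : Set α :=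
  ⋃ n : ℕ, hD.hullStep^[n] A

variable (hD : DirectedOn r D)

theorem monotone_hullStep : Monotone hD.hullStep :=
  fun _ _ h => Set.union_subset_union h (Set.image2_subset h h)

theorem monotone_iterate_hullStep (A : Set α) : Monotone fun n : ℕ => hD.hullStep^[n] A :=
  monotone_nat_of_le_succ fun n => by
    rw [Function.iterate_succ_apply']; exact Set.subset_union_left

theorem subset_hull (A : Set α) : A ⊆ hD.hull A :=
  Set.subset_iUnion (fun n => hD.hullStep^[n] A) 0

theorem hull_mono {A B : Set α} (h : A ⊆ B) : hD.hull A ⊆ hD.hull B :=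
  Set.iUnion_mono fun n => hD.monotone_hullStep.iterate n h

theorem hull_subset {A : Set α} (hA : A ⊆ D) : hD.hull A ⊆ D := by
  refine Set.iUnion_subset fun n => ?_
  induction n with
  | zero => exact hA
  | succ n ih =>
    rw [Function.iterate_succ_apply']
    exact Set.union_subset ih
      (Set.image2_subset_iff.2 fun a ha b hb => (hD.ub_spec (ih ha) (ih hb)).1)

theorem ub_mem_hull {A : Set α} {a b : α} (ha : a ∈ hD.hull A) (hb : b ∈ hD.hull A) :
    hD.ub a b ∈ hD.hull A := by
  obtain ⟨m, ha⟩ := Set.mem_iUnion.1 ha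
  obtain ⟨n, hb⟩ := Set.mem_iUnion.1 hb
  refine Set.mem_iUnion.2 ⟨max m n + 1, ?_⟩
  rw [Function.iterate_succ_apply']
  exact Or.inr (Set.mem_image2_of_mem (hD.monotone_iterate_hullStep A (le_max_left m n) ha)
    (hD.monotone_iterate_hullStep A (le_max_right m n) hb))

theorem directedOn_hull {A : Set α} (hA : A ⊆ D) : DirectedOn r (hD.hull A) :=
  fun a ha b hb => ⟨hD.ub a b, hD.ub_mem_hull ha hb,
    (hD.ub_spec (hD.hull_subset hA ha) (hD.hull_subset hA hb)).2⟩

theorem mk_hull_le {A : Set α} {κ : Cardinal.{u}} (hκ : Cardinal.aleph0 ≤ κ)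
    (hA : Cardinal.mk A ≤ κ) : Cardinal.mk (hD.hull A) ≤ κ := by
  have hiter (n : ℕ) : Cardinal.mk (hD.hullStep^[n] A) ≤ κ := by
    induction n with
    | zero => exact hA
    | succ n ih =>
      rw [Function.iterate_succ_apply']
      exact (Cardinal.mk_union_le _ _).trans (Cardinal.add_le_of_le hκ ih
        (Cardinal.mk_image2_le.trans (Cardinal.mul_le_of_le hκ ih ih)))
  have := Cardinal.mk_iUnion_le_lift.{u, 0} fun n : ℕ => hD.hullStep^[n] A
  simp only [Cardinal.lift_uzero, Cardinal.mk_nat, Cardinal.lift_aleph0] at this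
  exact this.trans (Cardinal.mul_le_of_le hκ hκ (ciSup_le' hiter))

end DirectedOn

theorem DirectedOn.exists_monotone_seq {α : Type*} [Preorder α] {D : Set α}
    (hD : DirectedOn (· ≤ ·) D) (hc : D.Countable) (hne : D.Nonempty) :
    ∃ e : ℕ → α, Monotone e ∧ (∀ n, e n ∈ D) ∧ ∀ d ∈ D, ∃ n, d ≤ e n := by
  obtain ⟨f, rfl⟩ := hc.exists_eq_range hne
  let e : ℕ → α := fun n => Nat.rec (f 0) (fun n en => hD.ub en (f (n + 1))) n
  have he (n : ℕ) : e n ∈ Set.range f ∧ f n ≤ e n := by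
    induction n with
    | zero => exact ⟨⟨0, rfl⟩, le_rfl⟩
    | succ n ih =>
      have := hD.ub_spec ih.1 ⟨n + 1, rfl⟩
      exact ⟨this.1, this.2.2⟩
  refine ⟨e, monotone_nat_of_le_succ fun n => ?_, fun n => (he n).1, ?_⟩
  · exact (hD.ub_spec (he n).1 ⟨n + 1, rfl⟩).2.1
  · rintro _ ⟨n, rfl⟩
    exact ⟨n, (he n).2⟩

theorem Cardinal.mk_Iic_toType_ord_aleph_succ_le (m : ℕ)
    (i : (Cardinal.aleph (m + 1 : ℕ)).ord.ToType) :
    Cardinal.mk (Set.Iic i) ≤ Cardinal.aleph m := by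
  have hIio : Cardinal.mk (Set.Iio i) < Order.succ (Cardinal.aleph m) := by
    rw [Cardinal.succ_aleph, ← Nat.cast_succ]
    simpa using Cardinal.mk_Iio_lt i
  rw [← Set.Iio_insert]
  exact Cardinal.mk_insert_le.trans (Cardinal.add_le_of_le (Cardinal.aleph0_le_aleph _)
    (Order.lt_succ_iff.1 hIio) (Cardinal.one_le_aleph0.trans (Cardinal.aleph0_le_aleph _)))

theorem DirectedOn.exists_iUnion_eq_of_mk_le_aleph_succ {α : Type u} {r : α → α → Prop}
    {D : Set α} (hD : DirectedOn r D) {m : ℕ}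
    (hcard : Cardinal.mk D ≤ Cardinal.aleph (m + 1 : ℕ)) :
    ∃ H : (Cardinal.aleph.{u} (m + 1 : ℕ)).ord.ToType → Set α, Monotone H ∧
      (∀ i, DirectedOn r (H i)) ∧ (∀ i, Cardinal.mk (H i) ≤ Cardinal.aleph m) ∧
      ⋃ i, H i = D := by
  obtain ⟨g⟩ : Nonempty (D ↪ (Cardinal.aleph (m + 1 : ℕ)).ord.ToType) := by
    rw [← Cardinal.le_def, Cardinal.mk_ord_toType]; exact hcard
  let A (i : (Cardinal.aleph (m + 1 : ℕ)).ord.ToType) : Set α := Subtype.val '' (g ⁻¹' Set.Iic i)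
  have hAD (i) : A i ⊆ D := Subtype.coe_image_subset _ _
  refine ⟨fun i => hD.hull (A i), fun i j hij => hD.hull_mono (Set.image_mono fun _ hd =>
    le_trans hd hij), fun i => hD.directedOn_hull (hAD i), fun i => ?_, ?_⟩
  · exact hD.mk_hull_le (Cardinal.aleph0_le_aleph _) (Cardinal.mk_image_le.trans <|
      (Cardinal.mk_preimage_of_injective _ _ g.injective).trans
        (Cardinal.mk_Iic_toType_ord_aleph_succ_le m i))
  · refine (Set.iUnion_subset fun i => hD.hull_subset (hAD i)).antisymm fun d hd => ?_
    exact Set.mem_iUnion.2 ⟨g ⟨d, hd⟩, hD.subset_hull _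
      ⟨⟨d, hd⟩, Set.mem_preimage.2 (Set.mem_Iic.2 le_rfl), rfl⟩⟩

theorem lowerClosure_biUnion_lt {ι α : Type*} [Preorder α] [LT ι] (H : ι → Set α) (i : ι) :
    ⋃ j < i, (lowerClosure (H j) : Set α) = lowerClosure (⋃ j < i, H j) := by
  ext a; simp [mem_lowerClosure]

theorem exists_cofinal_mk_eq_cofinality (Λ : Type u) [Preorder Λ] :
    ∃ C : Set Λ, (∀ a : Λ, ∃ b ∈ C, a ≤ b) ∧ Cardinal.mk C = cofinality Λ :=
  csInf_mem (s := {c | ∃ C : Set Λ, (∀ a : Λ, ∃ b ∈ C, a ≤ b) ∧ Cardinal.mk C = c})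
    ⟨_, Set.univ, fun a => ⟨a, trivial, le_rfl⟩, rfl⟩

namespace InvSys

section Coboundary

variable (S : InvSys.{u, v} Λ)

theorem p_apply_congr {n : ℕ} (x : S.Cochain n) {a : Λ} {t t' : Tup Λ n} (h : t = t')
    (ha : a ≤ t.1 0) (ha' : a ≤ t'.1 0) : S.p ha (x t) = S.p ha' (x t') := by
  subst h; rfl

theorem coboundary_apply {n : ℕ} (x : S.Cochain n) (t : Tup Λ (n + 1)) :
    S.coboundary n x t = ∑ i : Fin (n + 2),
      ((-1 : ℤ) ^ (i : ℕ)) • S.p (t.zero_le_face i) (x (t.face i)) :=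
  rfl

theorem coboundary_add {n : ℕ} (x y : S.Cochain n) :
    S.coboundary n (x + y) = S.coboundary n x + S.coboundary n y := by
  funext t
  show _ = S.coboundary n x t + S.coboundary n y t
  simp only [coboundary_apply, ← Finset.sum_add_distrib, ← smul_add]
  exact Finset.sum_congr rfl fun i _ => by rw [← map_add]; rfl

def coboundaryHom (n : ℕ) : S.Cochain n →+ S.Cochain (n + 1) :=
  AddMonoidHom.mk' (S.coboundary n) S.coboundary_add

theorem coboundary_sub {n : ℕ} (x y : S.Cochain n) :
    S.coboundary n (x - y) = S.coboundary n x - S.coboundary n y :=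
  (S.coboundaryHom n).map_sub x y

theorem coboundary_zero (n : ℕ) : S.coboundary n 0 = 0 :=
  (S.coboundaryHom n).map_zero

theorem coboundary_zsmul {n : ℕ} (c : ℤ) (x : S.Cochain n) :
    S.coboundary n (c • x) = c • S.coboundary n x :=
  map_zsmul (S.coboundaryHom n) c x

theorem coboundary_coboundary {n : ℕ} (x : S.Cochain n) :
    S.coboundary (n + 1) (S.coboundary n x) = 0 := by
  funext t
  rw [coboundary_apply]
  simp only [coboundary_apply, map_sum, map_zsmul, Finset.smul_sum, smul_smul, S.p_comp]
  refine Fin.sum_sum_eq_zero_of_add_eq_zero _ fun i j h => ?_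
  rw [S.p_apply_congr x (t.face_face h) _ (t.2 (Fin.zero_le _)), ← add_smul, Fin.val_succ,
    Fin.val_castSucc, pow_succ, mul_neg_one, neg_mul, mul_comm, neg_add_cancel, zero_smul]

open Classical in
noncomputable def cone (T : Λ) {n : ℕ} (x : S.Cochain (n + 1)) : S.Cochain n := fun s =>
  if h : s.1 (Fin.last n) ≤ T then S.p (s.snoc_zero T h).ge (x (s.snoc T h)) else 0

theorem cone_apply {T : Λ} {n : ℕ} (x : S.Cochain (n + 1)) {s : Tup Λ n}
    (h : s.1 (Fin.last n) ≤ T) : S.cone T x s = S.p (s.snoc_zero T h).ge (x (s.snoc T h)) :=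
  dif_pos h

theorem cone_coboundary {T : Λ} {n : ℕ} (x : S.Cochain (n + 1)) {t : Tup Λ (n + 1)}
    (ht : t.1 (Fin.last (n + 1)) ≤ T) :
    S.cone T (S.coboundary (n + 1) x) t =
      S.coboundary n (S.cone T x) t + (-1 : ℤ) ^ n • x t := by
  rw [S.cone_apply _ ht, coboundary_apply, coboundary_apply, map_sum, Fin.sum_univ_castSucc]
  congr 1
  · refine Finset.sum_congr rfl fun i _ => ?_
    rw [map_zsmul, S.p_comp, S.cone_apply _ ((t.face_last_le i).trans ht), S.p_comp,
      Fin.val_castSucc, S.p_apply_congr x (t.snoc_face_castSucc T ht i _)]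
  · rw [map_zsmul, S.p_comp, S.p_apply_congr x (t.snoc_face_last T ht) _ le_rfl, S.p_refl,
      Fin.val_last, pow_add, neg_one_sq, mul_one]

end Coboundary

variable {S : InvSys.{u, v} Λ}

def Cochain.EqOn {n : ℕ} (x y : S.Cochain n) (P : Set Λ) : Prop :=
  ∀ t : Tup Λ n, Set.range t.1 ⊆ P → x t = y t

namespace Cochain.EqOn

variable {n : ℕ} {x y z : S.Cochain n} {P Q : Set Λ}

theorem mono (h : x.EqOn y P) (hQP : Q ⊆ P) : x.EqOn y Q :=
  fun t ht => h t (ht.trans hQP)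

theorem symm (h : x.EqOn y P) : y.EqOn x P :=
  fun t ht => (h t ht).symm

theorem trans (h : x.EqOn y P) (h' : y.EqOn z P) : x.EqOn z P :=
  fun t ht => (h t ht).trans (h' t ht)

theorem of_empty : x.EqOn y ∅ :=
  fun _ ht => absurd (ht ⟨0, rfl⟩) (Set.notMem_empty _)

theorem coboundary (h : x.EqOn y P) : (S.coboundary n x).EqOn (S.coboundary n y) P :=
  fun t ht => Finset.sum_congr rfl fun i _ => by
    rw [h (t.face i) ((t.range_face_subset i).trans ht)]

end Cochain.EqOn

def IsCocycleOn (S : InvSys.{u, v} Λ) (P : Set Λ) {n : ℕ} (x : S.Cochain n) : Prop :=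
  (S.coboundary n x).EqOn 0 P

/-- `lim^{k+1}` of `S` restricted to `P` vanishes. -/
def ExactOn (S : InvSys.{u, v} Λ) (P : Set Λ) (k : ℕ) : Prop :=
  ∀ x : S.Cochain (k + 1), S.IsCocycleOn P x →
    ∃ y : S.Cochain k, (S.coboundary k y).EqOn x P

def CocyclesExtend (S : InvSys.{u, v} Λ) (P Q : Set Λ) (k : ℕ) : Prop :=
  ∀ x : S.Cochain k, S.IsCocycleOn P x → ∃ y : S.Cochain k, S.IsCocycleOn Q y ∧ y.EqOn x P

theorem IsCocycleOn.mono {P Q : Set Λ} {n : ℕ} {x : S.Cochain n} (hx : S.IsCocycleOn P x)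
    (hQP : Q ⊆ P) : S.IsCocycleOn Q x :=
  Cochain.EqOn.mono hx hQP

theorem exactOn_empty (k : ℕ) : S.ExactOn ∅ k :=
  fun _ _ => ⟨0, .of_empty⟩

theorem cocyclesExtend_empty (Q : Set Λ) (k : ℕ) : S.CocyclesExtend ∅ Q k :=
  fun _ _ => ⟨0, fun _ _ => by rw [coboundary_zero], .of_empty⟩

theorem ExactOn.cocyclesExtend {P : Set Λ} {k : ℕ} (h : S.ExactOn P k) (Q : Set Λ) :
    S.CocyclesExtend P Q (k + 1) := fun x hx => by
  obtain ⟨y, hy⟩ := h x hx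
  exact ⟨S.coboundary k y, fun t _ => by rw [coboundary_coboundary], hy⟩

theorem CocyclesExtend.exists_eqOn {P Q : Set Λ} (hPQ : P ⊆ Q) {k : ℕ}
    (hext : S.CocyclesExtend P Q k) {x : S.Cochain (k + 1)} {y z : S.Cochain k}
    (hy : (S.coboundary k y).EqOn x P) (hz : (S.coboundary k z).EqOn x Q) :
    ∃ y' : S.Cochain k, (S.coboundary k y').EqOn x Q ∧ y'.EqOn y P := by
  obtain ⟨w, hw, hwzy⟩ := hext (z - y) fun t ht => by
    rw [coboundary_sub]
    exact (congrArg₂ (· - ·) (hz t (ht.trans hPQ)) (hy t ht)).trans (sub_self _)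
  refine ⟨z - w, fun t ht => ?_, fun t ht => ?_⟩
  · rw [coboundary_sub]
    exact (congrArg₂ (· - ·) (hz t ht) (hw t ht)).trans (sub_zero _)
  · exact (congrArg (z t - ·) (hwzy t ht)).trans (sub_sub_cancel _ _)

theorem exactOn_of_isGreatest {P : Set Λ} {T : Λ} (hT : IsGreatest P T) (k : ℕ) :
    S.ExactOn P k := by
  intro x hx
  refine ⟨(-1 : ℤ) ^ (k + 1) • S.cone T x, fun t ht => ?_⟩
  have hlast : t.1 (Fin.last (k + 1)) ≤ T := hT.2 (ht ⟨_, rfl⟩)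
  have hcone : S.cone T (S.coboundary (k + 1) x) t = 0 := by
    rw [S.cone_apply _ hlast, hx (t.snoc T hlast) (by
      rw [Tup.range_snoc]; exact Set.insert_subset hT.1 ht)]
    exact map_zero _
  have key : S.coboundary k (S.cone T x) t = (-1 : ℤ) ^ (k + 1) • x t := by
    rw [pow_succ, mul_neg_one, neg_smul, eq_neg_iff_add_eq_zero, ← S.cone_coboundary x hlast,
      hcone]
  rw [coboundary_zsmul]
  show (-1 : ℤ) ^ (k + 1) • S.coboundary k (S.cone T x) t = x t
  rw [key, smul_smul, ← pow_add, Even.neg_one_pow ⟨k + 1, rfl⟩, one_smul]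

theorem IsCocycleOn.p_face_zero {P : Set Λ} {x : S.Cochain 0} (hx : S.IsCocycleOn P x)
    {t : Tup Λ 1} (ht : Set.range t.1 ⊆ P) :
    S.p (t.zero_le_face 0) (x (t.face 0)) = S.p (t.zero_le_face 1) (x (t.face 1)) := by
  have : S.coboundary 0 x t = 0 := hx t ht
  rw [coboundary_apply, Fin.sum_univ_two] at this
  simpa [add_neg_eq_zero] using this

theorem IsCocycleOn.p_pt {P : Set Λ} {x : S.Cochain 0} (hx : S.IsCocycleOn P x) {a b : Λ}
    (hab : a ≤ b) (ha : a ∈ P) (hb : b ∈ P) : S.p hab (x (Tup.pt b)) = x (Tup.pt a) := by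
  have hpair : Set.range (Tup.pair_s2 hab).1 ⊆ P := by
    rw [Tup.range_pair]; exact Set.insert_subset hb (Set.singleton_subset_iff.2 ha)
  exact (S.p_apply_congr x (Tup.pair_face_zero hab).symm _ _).trans <|
    (hx.p_face_zero hpair).trans <|
      (S.p_apply_congr x (Tup.pair_face_one hab) _ le_rfl).trans (S.p_refl _ _ _)

theorem cocyclesExtend_Iic_zero (hfl : ∀ {a b : Λ} (h : a ≤ b), Function.Surjective (S.p h))
    {a b : Λ} (hab : a ≤ b) : S.CocyclesExtend (Set.Iic a) (Set.Iic b) 0 := by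
  classical
  intro x hx
  obtain ⟨g, hg⟩ := hfl hab (x (Tup.pt a))
  let w : S.Cochain 0 := fun s => if h : s.1 0 ≤ b then S.p h g else 0
  have hw {s : Tup Λ 0} (h : s.1 0 ≤ b) : w s = S.p h g := dif_pos h
  refine ⟨w, fun t ht => ?_, fun s hs => ?_⟩
  · have hface (i : Fin 2) : (t.face i).1 0 ≤ b := ht (t.range_face_subset i ⟨0, rfl⟩)
    show S.coboundary 0 w t = 0
    rw [coboundary_apply, Fin.sum_univ_two, hw (hface 0), hw (hface 1), S.p_comp, S.p_comp]
    simp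
  · have hs0 : s.1 0 ≤ a := hs ⟨0, rfl⟩
    rw [hw (hs0.trans hab), ← S.p_comp hs0 hab, hg, hx.p_pt hs0 hs0 le_rfl]
    exact (S.p_refl _ _ _).symm.trans
      ((S.p_apply_congr x s.eq_pt.symm le_rfl le_rfl).trans (S.p_refl _ _ _))

theorem exists_glue {ι : Type*} {M : ι → Set Λ} (hM : Directed (· ⊆ ·) M) {k : ℕ}
    {x : S.Cochain (k + 1)} (y : ι → S.Cochain k)
    (hy : ∀ i, (S.coboundary k (y i)).EqOn x (M i))
    (hcompat : ∀ i j, (y i).EqOn (y j) (M i ∩ M j)) :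
    ∃ Y : S.Cochain k, (S.coboundary k Y).EqOn x (⋃ i, M i) ∧ ∀ i, Y.EqOn (y i) (M i) := by
  classical
  let Y : S.Cochain k := fun t =>
    if h : ∃ i, Set.range t.1 ⊆ M i then y h.choose t else 0
  have hY (i : ι) : Y.EqOn (y i) (M i) := fun t ht => by
    have h : ∃ i, Set.range t.1 ⊆ M i := ⟨i, ht⟩
    exact (dif_pos h).trans (hcompat _ i t (Set.subset_inter h.choose_spec ht))
  refine ⟨Y, fun t ht => ?_, hY⟩
  obtain ⟨i, hi⟩ := Tup.exists_range_subset hM ht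
  exact ((hY i).coboundary t hi).trans (hy i t hi)

structure LowerSolution (S : InvSys.{u, v} Λ) {I : Type*} [Preorder I] (N : I → Set Λ)
    {k : ℕ} (x : S.Cochain (k + 1)) where
  J : Set I
  isLowerSet : IsLowerSet J
  y : S.Cochain k
  eqOn : (S.coboundary k y).EqOn x (⋃ i ∈ J, N i)

namespace LowerSolution

variable {I : Type*} [Preorder I] {N : I → Set Λ} {k : ℕ} {x : S.Cochain (k + 1)}

instance : Preorder (LowerSolution S N x) where
  le a b := a.J ⊆ b.J ∧ b.y.EqOn a.y (⋃ i ∈ a.J, N i)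
  le_refl _ := ⟨subset_rfl, fun _ _ => rfl⟩
  le_trans _ _ _ hab hbc :=
    ⟨hab.1.trans hbc.1, (hbc.2.mono (Set.biUnion_mono hab.1 fun _ _ => subset_rfl)).trans hab.2⟩

theorem bddAbove_of_isChain {c : Set (LowerSolution S N x)} (hc : IsChain (· ≤ ·) c) :
    BddAbove c := by
  have hdir : Directed (· ⊆ ·) fun a : c => ⋃ i ∈ a.1.J, N i := fun a b =>
    (hc.total a.2 b.2).elim
      (fun h => ⟨b, Set.biUnion_mono h.1 fun _ _ => subset_rfl, subset_rfl⟩)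
      (fun h => ⟨a, subset_rfl, Set.biUnion_mono h.1 fun _ _ => subset_rfl⟩)
  obtain ⟨Y, hY, hYa⟩ := exists_glue hdir (fun a => a.1.y) (fun a => a.1.eqOn) fun a b =>
    (hc.total a.2 b.2).elim (fun h => h.2.symm.mono Set.inter_subset_left)
      (fun h => h.2.mono Set.inter_subset_right)
  refine ⟨⟨⋃ a : c, a.1.J, isLowerSet_iUnion fun a => a.1.isLowerSet, Y, ?_⟩, fun a ha =>
    ⟨Set.subset_iUnion (fun a : c => a.1.J) ⟨a, ha⟩, hYa ⟨a, ha⟩⟩⟩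
  rwa [Set.biUnion_iUnion]

end LowerSolution

theorem exactOn_iUnion {I : Type*} [LinearOrder I] [WellFoundedLT I] {N : I → Set Λ}
    (hN : Monotone N) {k : ℕ} (hsolve : ∀ i, S.ExactOn (N i) k)
    (hext : ∀ i, S.CocyclesExtend (⋃ j < i, N j) (N i) k) : S.ExactOn (⋃ i, N i) k := by
  intro x hx
  obtain ⟨m, hm⟩ := zorn_le (α := LowerSolution S N x)
    fun _ => LowerSolution.bddAbove_of_isChain
  by_cases hJ : m.J = Set.univ
  · exact ⟨m.y, by simpa [hJ] using m.eqOn⟩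
  obtain ⟨i, hiJ, hmin⟩ := wellFounded_lt.has_min m.Jᶜ (Set.nonempty_compl.2 hJ)
  have hJi : m.J = Set.Iio i := Set.ext fun j =>
    ⟨fun hj => lt_of_not_ge fun hij => hiJ (m.isLowerSet hij hj),
      fun hj => by_contra fun hjJ => hmin j hjJ hj⟩
  have hbelow : (⋃ j ∈ m.J, N j) = ⋃ j < i, N j := by rw [hJi]; rfl
  obtain ⟨z, hz⟩ := hsolve i x (hx.mono (Set.subset_iUnion N i))
  obtain ⟨y, hy, hym⟩ := (hext i).exists_eqOn (Set.iUnion₂_subset fun j hj => hN hj.le)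
    (hbelow ▸ m.eqOn) hz
  have hle : m ≤ ⟨Set.Iic i, isLowerSet_Iic i, y,
      hy.mono (Set.iUnion₂_subset fun j hj => hN hj)⟩ :=
    ⟨hJi ▸ Set.Iio_subset_Iic_self, hbelow ▸ hym⟩
  exact (hiJ ((hm hle).1 le_rfl)).elim

theorem exactOn_lowerClosure_of_countable
    (hfl : ∀ {a b : Λ} (h : a ≤ b), Function.Surjective (S.p h)) {D : Set Λ}
    (hD : DirectedOn (· ≤ ·) D) (hc : D.Countable) (k : ℕ) :
    S.ExactOn (lowerClosure D) k := by
  rcases D.eq_empty_or_nonempty with rfl | hne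
  · simpa using exactOn_empty k
  obtain ⟨e, he, heD, hDe⟩ := hD.exists_monotone_seq hc hne
  have hcover : (lowerClosure D : Set Λ) = ⋃ n, Set.Iic (e n) := by
    ext a
    simp only [SetLike.mem_coe, mem_lowerClosure, Set.mem_iUnion, Set.mem_Iic]
    exact ⟨fun ⟨d, hd, had⟩ => (hDe d hd).imp fun n => had.trans,
      fun ⟨n, han⟩ => ⟨e n, heD n, han⟩⟩
  rw [hcover]
  refine exactOn_iUnion (fun m n h => Set.Iic_subset_Iic.2 (he h))
    (fun n => exactOn_of_isGreatest isGreatest_Iic k) fun n => ?_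
  cases n with
  | zero => simpa using cocyclesExtend_empty _ k
  | succ n =>
    have hbelow : ⋃ j < n + 1, Set.Iic (e j) = Set.Iic (e n) :=
      (Set.iUnion₂_subset fun j (hj : j < n + 1) =>
        Set.Iic_subset_Iic.2 (he (Nat.lt_succ_iff.1 hj))).antisymm
        (Set.subset_biUnion_of_mem (u := fun j => Set.Iic (e j)) n.lt_succ_self)
    rw [hbelow]
    cases k with
    | zero => exact cocyclesExtend_Iic_zero hfl (he n.le_succ)
    | succ k => exact (exactOn_of_isGreatest isGreatest_Iic k).cocyclesExtend _

theorem exactOn_lowerClosure (hfl : ∀ {a b : Λ} (h : a ≤ b), Function.Surjective (S.p h))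
    (m : ℕ) {D : Set Λ} (hD : DirectedOn (· ≤ ·) D) (hcard : Cardinal.mk D ≤ Cardinal.aleph m)
    {k : ℕ} (hk : m ≤ k) : S.ExactOn (lowerClosure D) k := by
  induction m generalizing D k with
  | zero =>
    refine exactOn_lowerClosure_of_countable hfl hD
      (Cardinal.le_aleph0_iff_set_countable.1 ?_) k
    simpa using hcard
  | succ m ih =>
    obtain ⟨k, rfl⟩ : ∃ k', k = k' + 1 := ⟨k - 1, by omega⟩
    obtain ⟨H, hmono, hdir, hHcard, rfl⟩ := hD.exists_iUnion_eq_of_mk_le_aleph_succ hcard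
    rw [lowerClosure_iUnion, LowerSet.coe_iSup]
    refine exactOn_iUnion (fun i j hij => lowerClosure_mono (hmono hij))
      (fun i => ih (hdir i) (hHcard i) (by omega)) fun i => ExactOn.cocyclesExtend ?_ _
    rw [lowerClosure_biUnion_lt]
    refine ih ?_ ?_ (by omega)
    · have := Set.directedOn_iUnion (hmono.comp (Subtype.mono_coe (· < i))).directed_le
        fun j => hdir j.1
      simpa only [Function.comp_apply, Set.iUnion_subtype] using this
    · refine (Cardinal.mk_biUnion_le _ (Set.Iio i)).trans (Cardinal.mul_le_of_le
        (Cardinal.aleph0_le_aleph _) ?_ (ciSup_le' fun j => hHcard j))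
      exact (Cardinal.mk_le_mk_of_subset Set.Iio_subset_Iic_self).trans
        (Cardinal.mk_Iic_toType_ord_aleph_succ_le m i)

end InvSys

theorem flasque_goblot [IsDirected Λ (· ≤ ·)] (n : ℕ) (S : InvSys.{u, v} Λ)
    (hflasque : ∀ {a b : Λ} (h : a ≤ b), Function.Surjective (S.p h))
    (hcof : cofinality Λ = Cardinal.aleph n) :
    ∀ k : ℕ, n ≤ k → ∀ x : S.Cochain (k + 1), S.coboundary (k + 1) x = 0 →
      ∃ y : S.Cochain k, S.coboundary k y = x := by
  intro k hk x hx
  obtain ⟨C, hC, hCcard⟩ := exists_cofinal_mk_eq_cofinality Λ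
  have hU : DirectedOn (· ≤ ·) (Set.univ : Set Λ) := directedOn_univ
  have hcover : (lowerClosure (hU.hull C) : Set Λ) = Set.univ :=
    Set.eq_univ_of_forall fun a => (hC a).imp fun c hc => ⟨hU.subset_hull C hc.1, hc.2⟩
  obtain ⟨y, hy⟩ := InvSys.exactOn_lowerClosure hflasque n
    (hU.directedOn_hull (Set.subset_univ C))
    (hU.mk_hull_le (Cardinal.aleph0_le_aleph n) (hCcard.trans hcof).le) hk x
    fun t _ => congrFun hx t
  exact ⟨y, funext fun t => hy t (by rw [hcover]; exact Set.subset_univ _)⟩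
end

section
/- Let λ be an ordinal of cofinality ω, with an increasing sequence (α_i)_{i∈ω} converging to λ, and let G^λ_0 be the inverse system with G_α = ⊕_{ξ∈[α,λ)} ℤ_2 and inclusion bonding maps. The coherent sequence x_{α,β} = {α_i : α ≤ α_i < β} is nontrivial: there is no family (y_α)_{α<λ} with y_α ∈ G_α such that x_{α,β} = y_α + p^β_α(y_β) for all α ≤ β. Consequently lim^1 G^λ_0 ≠ 0. -/
/-! Every `α_i` lies in `x_{0,α_j}` for some `α_j > α_i`, but not in `y_{α_j} ⊆ [α_j, λ)`, so it
lies in `y_0`. Hence `y_0` would contain the infinite set `{α_i : i ∈ ω}`. -/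

theorem Set.mem_of_mem_symmDiff_of_subset_Ici {ι : Type*} [Preorder ι] {s t : Set ι} {b ξ : ι}
    (ht : t ⊆ Set.Ici b) (hξ : ξ ∈ symmDiff s t) (hξb : ξ < b) : ξ ∈ s :=
  (Set.mem_symmDiff.1 hξ).elim And.left fun h => absurd (ht h.1) hξb.not_ge

theorem mitchell_base_nontrivial_general (l : Ordinal)
    (a : ℕ → Ordinal) (ha : StrictMono a) (halt : ∀ i, a i < l)
    (hconv : ∀ β, β < l → ∃ i, β < a i)
    (x : Ordinal → Ordinal → Set Ordinal)
    (hx : ∀ α β, x α β = {ξ | (∃ i, ξ = a i) ∧ α ≤ ξ ∧ ξ < β}) :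
    ¬ ∃ y : Ordinal → Set Ordinal,
        (∀ α, α < l → (y α).Finite ∧ y α ⊆ Set.Ico α l) ∧
        (∀ α β : Ordinal, α ≤ β → β < l → x α β = symmDiff (y α) (y β)) := by
  rintro ⟨y, hy, hxy⟩
  have hrange : Set.range a ⊆ y 0 := by
    rintro _ ⟨i, rfl⟩
    obtain ⟨j, hij⟩ := hconv (a i) (halt i)
    have hmem : a i ∈ x 0 (a j) := by
      rw [hx]
      exact ⟨⟨i, rfl⟩, zero_le, hij⟩
    rw [hxy 0 (a j) (zero_le) (halt j)] at hmem
    exact Set.mem_of_mem_symmDiff_of_subset_Ici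
      ((hy _ (halt j)).2.trans Set.Ico_subset_Ici_self) hmem hij
  exact Set.infinite_range_of_injective ha.injective
    ((hy 0 ((zero_le).trans_lt (halt 0))).1.subset hrange)

theorem mitchell_base_nontrivial (l : Ordinal) (hl : l.cof = Cardinal.aleph0)
    (a : ℕ → Ordinal) (ha : StrictMono a) (halt : ∀ i, a i < l)
    (hconv : ∀ β, β < l → ∃ i, β < a i)
    (x : Ordinal → Ordinal → Set Ordinal)
    (hx : ∀ α β, x α β = {ξ | (∃ i, ξ = a i) ∧ α ≤ ξ ∧ ξ < β}) :
    ¬ ∃ y : Ordinal → Set Ordinal,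
        (∀ α, α < l → (y α).Finite ∧ y α ⊆ Set.Ico α l) ∧
        (∀ α β : Ordinal, α ≤ β → β < l → x α β = symmDiff (y α) (y β)) :=
  mitchell_base_nontrivial_general l a ha halt hconv x hx
end

section
/- Let Λ be a directed set, G a Λ-inverse system of abelian groups, and C ⊆ Λ a cofinal linearly ordered (well-ordered) subset. Every coherent element x of (G restricted to C)^{(n)} extends to a coherent element z of G^{(n)} with z restricted to C^{(n)} equal to x. The extension is given by z_{λ_0,…,λ_n} = p^{s(λ_0)}_{λ_0}(x_{s(λ_0),…,s(λ_n)}) where s(λ) is the least element of C above λ. -/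
/-!
Write `z = s^* x` for the cochain `z_t = p^{s(t_0)}_{t_0}(x_{s(t)})`. Since `s` is monotone
and the bonding maps compose, every term of `(δz)_t` is `p^{s(t_0)}_{t_0}` applied to the
corresponding term of `(δx)_{s(t)}`, so `δz = s^*(δx) = 0`; and since `s` fixes `C`,
`z` restricts to `x` on `C`.
-/

universe u v

variable {Λ : Type u} [Preorder Λ]

/-- The restriction of an inverse system to a subset `C` of the index set. -/
def InvSys.restrict (S : InvSys.{u, v} Λ) (C : Set Λ) : InvSys.{u, v} C where
  G c := S.G c.1
  inst c := S.inst c.1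
  p h := S.p h
  p_refl a h x := S.p_refl a.1 h x
  p_comp hab hbc x := S.p_comp hab hbc x

/-- Transport a tuple of `Λ` to a tuple of `C` along an increasing map `s : Λ → C`. -/
def mapTup {C : Set Λ} (s : Λ → Λ) (hsC : ∀ a, s a ∈ C) (hsmono : Monotone s)
    {n : ℕ} (t : Tup Λ n) : Tup C n :=
  ⟨fun i => ⟨s (t.1 i), hsC _⟩, fun _ _ h => hsmono (t.2 h)⟩

/-- The inclusion of tuples of `C` into tuples of `Λ`. -/
def embTup {C : Set Λ} {n : ℕ} (t : Tup C n) : Tup Λ n :=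
  ⟨fun i => (t.1 i).1, fun _ _ h => t.2 h⟩

theorem mapTup_embTup {C : Set Λ} (s : Λ → Λ) (hsC : ∀ a, s a ∈ C)
    (hsmono : Monotone s) (hid : ∀ c ∈ C, s c = c) {n : ℕ} (t : Tup C n) :
    mapTup s hsC hsmono (embTup t) = t :=
  Subtype.ext <| funext fun i => Subtype.ext (hid _ (t.1 i).2)

namespace InvSys

variable (S : InvSys.{u, v} Λ) {C : Set Λ}

def extendCochain (s : Λ → Λ) (hsC : ∀ a, s a ∈ C) (hle : ∀ a, a ≤ s a) (hsmono : Monotone s)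
    {n : ℕ} (x : (S.restrict C).Cochain n) : S.Cochain n :=
  fun t => S.p (hle (t.1 0)) (x (mapTup s hsC hsmono t))

theorem coboundary_extendCochain (s : Λ → Λ) (hsC : ∀ a, s a ∈ C) (hle : ∀ a, a ≤ s a)
    (hsmono : Monotone s) {n : ℕ} (x : (S.restrict C).Cochain n) (t : Tup Λ (n + 1)) :
    S.coboundary n (S.extendCochain s hsC hle hsmono x) t =
      S.p (hle (t.1 0)) ((S.restrict C).coboundary n x (mapTup s hsC hsmono t)) := by
  refine Eq.trans ?_ (map_sum (S.p (hle (t.1 0))) _ _).symm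
  refine Finset.sum_congr rfl fun i _ => Eq.trans ?_ (map_zsmul _ _ _).symm
  congr 1
  exact (S.p_comp _ _ _).trans (S.p_comp _ _ _).symm

theorem p_cochain_of_eq {n : ℕ} (x : (S.restrict C).Cochain n) {t t' : Tup C n} (h : t' = t)
    (hle : (t.1 0).1 ≤ (t'.1 0).1) : S.p hle (x t') = x t := by
  subst h
  exact S.p_refl _ _ _

end InvSys

theorem coherent_extension_of_cofinal_chain_general
    (S : InvSys.{u, v} Λ) (C : Set Λ)
    (s : Λ → Λ) (hsC : ∀ a, s a ∈ C) (hle : ∀ a, a ≤ s a)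
    (hid : ∀ c ∈ C, s c = c) (hsmono : Monotone s)
    (n : ℕ) (x : (S.restrict C).Cochain n)
    (hx : (S.restrict C).coboundary n x = 0) :
    ∃ z : S.Cochain n,
      (∀ t : Tup Λ n, z t = S.p (hle (t.1 0)) (x (mapTup s hsC hsmono t))) ∧
      S.coboundary n z = 0 ∧
      (∀ t : Tup C n, z (embTup t) = x t) := by
  refine ⟨S.extendCochain s hsC hle hsmono x, fun _ => rfl, ?_, fun t => ?_⟩
  · funext t
    rw [S.coboundary_extendCochain, hx]
    exact map_zero _
  · exact S.p_cochain_of_eq x (mapTup_embTup s hsC hsmono hid t) _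

theorem coherent_extension_of_cofinal_chain [IsDirected Λ (· ≤ ·)]
    (S : InvSys.{u, v} Λ) (C : Set Λ)
    (hcof : ∀ a : Λ, ∃ b ∈ C, a ≤ b)
    (hlin : ∀ a ∈ C, ∀ b ∈ C, a ≤ b ∨ b ≤ a)
    (hwo : C.WellFoundedOn (· < ·))
    (s : Λ → Λ) (hsC : ∀ a, s a ∈ C) (hle : ∀ a, a ≤ s a)
    (hleast : ∀ a, ∀ c ∈ C, a ≤ c → s a ≤ c)
    (hid : ∀ c ∈ C, s c = c) (hsmono : Monotone s)
    (n : ℕ) (x : (S.restrict C).Cochain n)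
    (hx : (S.restrict C).coboundary n x = 0) :
    ∃ z : S.Cochain n,
      (∀ t : Tup Λ n, z t = S.p (hle (t.1 0)) (x (mapTup s hsC hsmono t))) ∧
      S.coboundary n z = 0 ∧
      (∀ t : Tup C n, z (embTup t) = x t) :=
  coherent_extension_of_cofinal_chain_general S C s hsC hle hid hsmono n x hx
end

section
/- Suppose I is an ideal on ω of cofinality ℵ_1 containing all finite sets, and G_k = ℤ for all k. Then lim^1 G_I ≠ 0, where G_I is the inverse system of groups G_a = ⊕_{k∈a} ℤ for a ∈ I with projection bonding maps. Equivalently, if {a_ξ : ξ < ω_1} is a ⊆_*-cofinal family in I with each a_ξ infinite and not in the ideal generated by finite sets and {a_η : η < ξ}, then there exist functions f_ξ : a_ξ → ℤ such that f_ξ and f_η agree on all but finitely many points of a_ξ ∩ a_η for all ξ, η, yet no single f : ω → ℤ satisfies f ↾ a_ξ =_* f_ξ for all ξ < ω_1. -/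
open Cardinal

/-- The index set `ω₁`: ordinals below `ω₁ = (ℵ₁).ord`. -/
def Omega1 : Type 1 := ↥(Set.Iio (Cardinal.aleph 1).ord)

noncomputable instance : LinearOrder Omega1 :=
  inferInstanceAs (LinearOrder ↥(Set.Iio (Cardinal.aleph 1).ord))

attribute [local instance] Classical.propDecidable

namespace Lim1Proof

instance : WellFoundedLT Omega1 :=
  inferInstanceAs (WellFoundedLT ↥(Set.Iio (Cardinal.aleph 1).ord))

/-- Integer code of a pair (finite set, natural number). -/
noncomputable def zcode (s : Finset ℕ) (n : ℕ) : ℤ := (Encodable.encode (s, n) : ℤ)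

lemma zcode_inj {s t : Finset ℕ} {m n : ℕ} (h : zcode s m = zcode t n) : s = t ∧ m = n := by
  have h0 : ((Encodable.encode (s, m) : ℕ) : ℤ) = ((Encodable.encode (t, n) : ℕ) : ℤ) := h
  have h' : Encodable.encode (s, m) = Encodable.encode (t, n) := by exact_mod_cast h0
  have h2 := Encodable.encode_injective h'
  exact ⟨congrArg Prod.fst h2, congrArg Prod.snd h2⟩

lemma pfx_fin (B : Set ℕ) (k : ℕ) : (Set.Iio k ∩ B).Finite :=
  (Set.finite_Iio k).subset Set.inter_subset_left

/-- The prefix of `B` below `k`, as a finset. -/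
noncomputable def pfx (B : Set ℕ) (k : ℕ) : Finset ℕ := (pfx_fin B k).toFinset

lemma pfx_eq {B C : Set ℕ} {k : ℕ} (h : pfx B k = pfx C k) :
    Set.Iio k ∩ B = Set.Iio k ∩ C := by
  calc Set.Iio k ∩ B = ↑(pfx B k) := (Set.Finite.coe_toFinset _).symm
    _ = ↑(pfx C k) := by rw [h]
    _ = Set.Iio k ∩ C := Set.Finite.coe_toFinset _

/-- The least element of `B` strictly above `k`. -/
noncomputable def nxt (B : Set ℕ) (k : ℕ) : ℕ := sInf {m | m ∈ B ∧ k < m}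

lemma nxt_spec {B : Set ℕ} (hB : B.Infinite) (k : ℕ) :
    nxt B k ∈ B ∧ k < nxt B k := by
  have hne : {m | m ∈ B ∧ k < m}.Nonempty := by
    by_contra hne
    rw [Set.not_nonempty_iff_eq_empty] at hne
    apply hB
    apply (Set.finite_Iic k).subset
    intro x hx
    by_contra hxk
    have hmem : x ∈ {m | m ∈ B ∧ k < m} := ⟨hx, not_le.mp hxk⟩
    rw [hne] at hmem
    exact hmem
  exact Nat.sInf_mem hne

lemma nxt_le {B : Set ℕ} {k m : ℕ} (hm : m ∈ B) (hk : k < m) : nxt B k ≤ m :=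
  Nat.sInf_le ⟨hm, hk⟩

section Fam

variable (a b : Omega1 → Set ℕ) (e : Omega1 → ℕ → Omega1)

/-- One step of the recursive construction of the coherent family. -/
noncomputable def step (ξ : Omega1) (rec : ∀ η : Omega1, η < ξ → ℕ → ℤ) : ℕ → ℤ :=
  fun k =>
    if k ∈ b ξ then zcode (pfx (b ξ) k) (nxt (b ξ) k)
    else if h : ∃ n, e ξ n < ξ ∧ k ∈ a (e ξ n) then
      rec (e ξ (Nat.find h)) (Nat.find_spec h).1 k
    else 0

/-- The coherent family. -/
noncomputable def fam : Omega1 → ℕ → ℤ :=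
  WellFounded.fix wellFounded_lt (step a b e)

lemma fam_eq (ξ : Omega1) :
    fam a b e ξ = step a b e ξ (fun η _ => fam a b e η) :=
  WellFounded.fix_eq _ _ _

lemma fam_mem {ξ : Omega1} {k : ℕ} (hk : k ∈ b ξ) :
    fam a b e ξ k = zcode (pfx (b ξ) k) (nxt (b ξ) k) := by
  rw [fam_eq a b e ξ]
  simp only [step]
  rw [if_pos hk]

lemma fam_notmem {ξ : Omega1} {k : ℕ} (hk : k ∉ b ξ)
    (h : ∃ n, e ξ n < ξ ∧ k ∈ a (e ξ n)) :
    fam a b e ξ k = fam a b e (e ξ (Nat.find h)) k := by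
  rw [fam_eq a b e ξ]
  simp only [step]
  rw [if_neg hk, dif_pos h]

lemma coh (hb3 : ∀ ξ η : Omega1, η < ξ → (b ξ ∩ a η).Finite)
    (he : ∀ ξ η : Omega1, η < ξ → ∃ n, e ξ n = η) :
    ∀ ξ : Omega1, ∀ η, η < ξ →
      {k | k ∈ a η ∩ a ξ ∧ fam a b e η k ≠ fam a b e ξ k}.Finite := by
  intro ξ
  refine wellFounded_lt.induction
    (C := fun ξ => ∀ η, η < ξ →
      {k | k ∈ a η ∩ a ξ ∧ fam a b e η k ≠ fam a b e ξ k}.Finite) ξ ?_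
  intro ξ IH η hη
  have pair : ∀ ρ σ : Omega1, ρ < ξ → σ < ξ →
      {k | k ∈ a ρ ∩ a σ ∧ fam a b e ρ k ≠ fam a b e σ k}.Finite := by
    intro ρ σ hρ hσ
    rcases lt_trichotomy ρ σ with h | h | h
    · exact IH σ hσ ρ h
    · subst h
      refine Set.Finite.subset Set.finite_empty ?_
      rintro k ⟨-, hne⟩
      exact absurd rfl hne
    · refine (IH ρ hρ σ h).subset ?_
      rintro k ⟨⟨h1, h2⟩, h3⟩
      exact ⟨⟨h2, h1⟩, fun hh => h3 hh.symm⟩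
  obtain ⟨j, hj⟩ := he ξ η hη
  have hcov : {k | k ∈ a η ∩ a ξ ∧ fam a b e η k ≠ fam a b e ξ k} ⊆
      (b ξ ∩ a η) ∪ ⋃ n ∈ Finset.range (j + 1),
        {k | e ξ n < ξ ∧ (k ∈ a (e ξ n) ∩ a η ∧
          fam a b e (e ξ n) k ≠ fam a b e η k)} := by
    rintro k ⟨⟨hkη, hkξ⟩, hne⟩
    by_cases hkb : k ∈ b ξ
    · exact Or.inl ⟨hkb, hkη⟩
    · have hex : ∃ n, e ξ n < ξ ∧ k ∈ a (e ξ n) :=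
        ⟨j, by rw [hj]; exact hη, by rw [hj]; exact hkη⟩
      have hval := fam_notmem a b e hkb hex
      have hfind : Nat.find hex ≤ j :=
        Nat.find_min' hex ⟨by rw [hj]; exact hη, by rw [hj]; exact hkη⟩
      refine Or.inr ?_
      simp only [Set.mem_iUnion]
      refine ⟨Nat.find hex, Finset.mem_range.mpr (Nat.lt_succ_of_le hfind),
        (Nat.find_spec hex).1, ⟨(Nat.find_spec hex).2, hkη⟩, ?_⟩
      intro hh
      exact hne ((hval.trans hh).symm)
  refine Set.Finite.subset (Set.Finite.union (hb3 ξ η hη) ?_) hcov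
  refine Set.Finite.biUnion (Finset.finite_toSet _) ?_
  intro n _
  by_cases hlt : e ξ n < ξ
  · refine (pair (e ξ n) η hlt hη).subset ?_
    rintro k ⟨-, hk⟩
    exact hk
  · refine Set.Finite.subset Set.finite_empty ?_
    rintro k ⟨h1, -⟩
    exact absurd h1 hlt

end Fam

lemma initseg_countable (ξ : Omega1) : {η : Omega1 | η < ξ}.Countable := by
  rw [← Set.countable_coe_iff]
  have hcount : Countable ↥(Set.Iio (Subtype.val ξ)) := by
    rw [← Cardinal.mk_le_aleph0_iff, Ordinal.mk_Iio_ordinal]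
    have hcard : (Subtype.val ξ).card ≤ ℵ₀ := by
      have h1 : Subtype.val ξ < (Cardinal.aleph 1).ord := ξ.2
      have h2 : (Subtype.val ξ).card < Cardinal.aleph 1 := Cardinal.lt_ord.mp h1
      have h3 : Cardinal.aleph 1 = Order.succ (ℵ₀ : Cardinal) := by
        rw [← Cardinal.aleph_zero, ← Cardinal.aleph_succ]
        norm_num
      exact Order.lt_succ_iff.mp (lt_of_lt_of_le h2 (le_of_eq h3))
    calc Cardinal.lift.{1} (Subtype.val ξ).card ≤ Cardinal.lift.{1} ℵ₀ :=
          Cardinal.lift_le.mpr hcard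
      _ = ℵ₀ := Cardinal.lift_aleph0
  have hinj : Function.Injective (fun η : {η : Omega1 | η < ξ} =>
      (⟨Subtype.val η.1, Set.mem_Iio.mpr
        ((Subtype.coe_lt_coe.mpr η.2 : Subtype.val η.1 < Subtype.val ξ))⟩ :
          ↥(Set.Iio (Subtype.val ξ)))) := by
    intro x y hxy
    exact Subtype.ext (Subtype.ext
      (congrArg (fun z : ↥(Set.Iio (Subtype.val ξ)) => Subtype.val z) hxy))
  exact hinj.countable

lemma exists_enum (ξ : Omega1) : ∃ E : ℕ → Omega1, ∀ η, η < ξ → ∃ n, E n = η := by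
  by_cases hne : ∃ η : Omega1, η < ξ
  · obtain ⟨η₀, hη₀⟩ := hne
    obtain ⟨E, hE⟩ := (initseg_countable ξ).exists_eq_range ⟨η₀, hη₀⟩
    refine ⟨E, fun η hη => ?_⟩
    have hmem : η ∈ Set.range E := by rw [← hE]; exact hη
    obtain ⟨n, hn⟩ := hmem
    exact ⟨n, hn⟩
  · exact ⟨fun _ => ξ, fun η hη => absurd ⟨η, hη⟩ hne⟩

lemma omega1_uncountable : ¬ ∃ F : Omega1 → ℕ, Function.Injective F := by
  rintro ⟨F, hF⟩
  have hc : Countable Omega1 := (countable_iff_exists_injective Omega1).mpr ⟨F, hF⟩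
  have h1 : (#Omega1) ≤ ℵ₀ := Cardinal.mk_le_aleph0
  have h2 : (#Omega1) = Cardinal.lift.{1} ((Cardinal.aleph 1).ord.card) :=
    Ordinal.mk_Iio_ordinal ((Cardinal.aleph 1).ord)
  rw [h2, Cardinal.card_ord] at h1
  rw [show (ℵ₀ : Cardinal.{1}) = Cardinal.lift.{1} (ℵ₀ : Cardinal.{0}) from
    Cardinal.lift_aleph0.symm] at h1
  have h3 : Cardinal.aleph 1 ≤ ℵ₀ := Cardinal.lift_le.mp h1
  exact absurd h3 (not_le.mpr Cardinal.aleph0_lt_aleph_one)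

end Lim1Proof

/-!
Statement 8: Suppose `I` is an ideal on `ω` of cofinality `ℵ₁` containing all finite
sets, and `G_k = ℤ` for all `k`.  Then `lim^1 G_I ≠ 0`.  Equivalently, if
`{a_ξ : ξ < ω₁}` is a `⊆_*`-cofinal family in `I` with each `a_ξ` infinite and not in
the ideal generated by the finite sets together with `{a_η : η < ξ}`, then there are
functions `f_ξ : a_ξ → ℤ` such that `f_ξ` and `f_η` agree on all but finitely many
points of `a_ξ ∩ a_η`, yet no single `f : ω → ℤ` satisfies `f ↾ a_ξ =_* f_ξ` for all
`ξ < ω₁`.  (We formalize the equivalent combinatorial statement; the functions `f_ξ`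
are represented as total functions whose values matter only on `a_ξ`.)
-/
theorem lim_one_ideal_int_ne_zero
    (I : Set (Set ℕ))
    (hdown : ∀ a b : Set ℕ, a ⊆ b → b ∈ I → a ∈ I)
    (hunion : ∀ a b : Set ℕ, a ∈ I → b ∈ I → a ∪ b ∈ I)
    (hfin : ∀ a : Set ℕ, a.Finite → a ∈ I)
    (hcof : sInf {c : Cardinal.{0} | ∃ C : Set (Set ℕ), C ⊆ I ∧
        (∀ a ∈ I, ∃ b ∈ C, a ⊆ b) ∧ Cardinal.mk C = c} = Cardinal.aleph 1)
    (a : Omega1 → Set ℕ)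
    (haI : ∀ ξ, a ξ ∈ I)
    (hainf : ∀ ξ, (a ξ).Infinite)
    (hacof : ∀ b ∈ I, ∃ ξ, (b \ a ξ).Finite)
    (haind : ∀ ξ : Omega1, ¬ ∃ (F : Finset Omega1) (s : Set ℕ), s.Finite ∧
        (∀ η ∈ F, η < ξ) ∧ a ξ ⊆ s ∪ ⋃ η ∈ F, a η) :
    ∃ f : Omega1 → ℕ → ℤ,
      (∀ ξ η : Omega1, {k | k ∈ a ξ ∩ a η ∧ f ξ k ≠ f η k}.Finite) ∧
      ¬ ∃ g : ℕ → ℤ, ∀ ξ : Omega1, {k | k ∈ a ξ ∧ g k ≠ f ξ k}.Finite := by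
  classical
  open Lim1Proof in
  -- an enumeration of the predecessors of each `ξ`
  obtain ⟨e, he⟩ : ∃ e : Omega1 → ℕ → Omega1,
      ∀ ξ η, η < ξ → ∃ n, e ξ n = η := by
    choose e he using Lim1Proof.exists_enum
    exact ⟨e, he⟩
  -- the almost disjoint sets `b ξ ⊆ a ξ`
  have hb_ex : ∀ ξ : Omega1, ∃ B : Set ℕ,
      B ⊆ a ξ ∧ B.Infinite ∧ ∀ η, η < ξ → (B ∩ a η).Finite := by
    intro ξ
    have key : ∀ n Mb : ℕ, ∃ x, Mb < x ∧ x ∈ a ξ ∧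
        ∀ j, j ≤ n → e ξ j < ξ → x ∉ a (e ξ j) := by
      intro n Mb
      by_contra hcon
      push_neg at hcon
      apply haind ξ
      refine ⟨((Finset.range (n + 1)).image (e ξ)).filter (fun η => η < ξ),
        Set.Iic Mb, Set.finite_Iic Mb, ?_, ?_⟩
      · intro η hηmem
        exact (Finset.mem_filter.mp hηmem).2
      · intro x hx
        by_cases hxM : x ≤ Mb
        · exact Or.inl hxM
        · obtain ⟨j, hj1, hj2, hj3⟩ := hcon x (not_le.mp hxM) hx
          refine Or.inr ?_
          simp only [Set.mem_iUnion]
          exact ⟨e ξ j, Finset.mem_filter.mpr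
            ⟨Finset.mem_image.mpr ⟨j, Finset.mem_range.mpr (Nat.lt_succ_of_le hj1), rfl⟩,
              hj2⟩, hj3⟩
    choose x hx1 hx2 hx3 using key
    obtain ⟨kk, hkk0, hkks⟩ : ∃ kk : ℕ → ℕ, kk 0 = x 0 0 ∧
        ∀ m, kk (m + 1) = x (m + 1) (kk m) :=
      ⟨fun n => Nat.rec (x 0 0) (fun m prev => x (m + 1) prev) n, rfl, fun _ => rfl⟩
    have hmono : StrictMono kk := by
      apply strictMono_nat_of_lt_succ
      intro m
      rw [hkks]
      exact hx1 (m + 1) (kk m)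
    have hmem : ∀ m, kk m ∈ a ξ := by
      intro m
      cases m with
      | zero => rw [hkk0]; exact hx2 0 0
      | succ p => rw [hkks]; exact hx2 (p + 1) (kk p)
    have havoid : ∀ m j, j ≤ m → e ξ j < ξ → kk m ∉ a (e ξ j) := by
      intro m j hj hlt
      cases m with
      | zero => rw [hkk0]; exact hx3 0 0 j hj hlt
      | succ p => rw [hkks]; exact hx3 (p + 1) (kk p) j hj hlt
    refine ⟨Set.range kk, ?_, ?_, ?_⟩
    · rintro y ⟨m, rfl⟩
      exact hmem m
    · exact Set.infinite_range_of_injective hmono.injective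
    · intro η hη
      obtain ⟨j, hj⟩ := he ξ η hη
      have hsub : Set.range kk ∩ a η ⊆ kk '' Set.Iio j := by
        rintro y ⟨⟨m, rfl⟩, hya⟩
        refine ⟨m, ?_, rfl⟩
        by_contra hmj
        rw [Set.mem_Iio, not_lt] at hmj
        exact absurd (show kk m ∈ a (e ξ j) by rw [hj]; exact hya)
          (havoid m j hmj (by rw [hj]; exact hη))
      exact ((Set.finite_Iio j).image kk).subset hsub
  choose b hb1 hb2 hb3 using hb_ex
  refine ⟨Lim1Proof.fam a b e, ?_, ?_⟩
  · -- coherence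
    intro ξ η
    rcases lt_trichotomy ξ η with h | h | h
    · exact Lim1Proof.coh a b e hb3 (fun ξ η hη => he ξ η hη) η ξ h
    · subst h
      refine Set.Finite.subset Set.finite_empty ?_
      rintro k ⟨-, hne⟩
      exact absurd rfl hne
    · refine (Lim1Proof.coh a b e hb3 (fun ξ η hη => he ξ η hη) ξ η h).subset ?_
      rintro k ⟨⟨h1, h2⟩, h3⟩
      exact ⟨⟨h2, h1⟩, fun hh => h3 hh.symm⟩
  · -- nontriviality
    rintro ⟨g, hg⟩
    have hM : ∀ ξ : Omega1, ∃ M : ℕ, ∀ k, k ∈ a ξ → g k ≠ Lim1Proof.fam a b e ξ k → k ≤ M := by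
      intro ξ
      obtain ⟨M, hMub⟩ := (hg ξ).bddAbove
      exact ⟨M, fun k h1 h2 => hMub ⟨h1, h2⟩⟩
    choose M hMs using hM
    have hcap : ∀ (ξ : Omega1) (k : ℕ), k ∈ b ξ → M ξ < k →
        g k = Lim1Proof.zcode (Lim1Proof.pfx (b ξ) k) (Lim1Proof.nxt (b ξ) k) := by
      intro ξ k hkb hkM
      have hka : k ∈ a ξ := hb1 ξ hkb
      have hgk : g k = Lim1Proof.fam a b e ξ k := by
        by_contra hcon
        exact absurd (hMs ξ k hka hcon) (not_le.mpr hkM)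
      rw [hgk, Lim1Proof.fam_mem a b e hkb]
    obtain ⟨K, hKspec⟩ : ∃ K : Omega1 → ℕ, ∀ ξ, K ξ ∈ b ξ ∧ M ξ < K ξ :=
      ⟨fun ξ => Lim1Proof.nxt (b ξ) (M ξ), fun ξ => Lim1Proof.nxt_spec (hb2 ξ) (M ξ)⟩
    have hninj : ¬ Function.Injective K :=
      fun hinj => Lim1Proof.omega1_uncountable ⟨K, hinj⟩
    rw [Function.not_injective_iff] at hninj
    obtain ⟨ξ, η, hKeq, hξη⟩ := hninj
    obtain ⟨c, hc0, hcs⟩ : ∃ c : ℕ → ℕ, c 0 = K ξ ∧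
        ∀ n, c (n + 1) = Lim1Proof.nxt (b ξ) (c n) :=
      ⟨fun n => Nat.rec (K ξ) (fun _ prev => Lim1Proof.nxt (b ξ) prev) n, rfl, fun _ => rfl⟩
    have main : ∀ n, c n ∈ b ξ ∧ c n ∈ b η ∧ M ξ < c n ∧ M η < c n ∧
        (Set.Iio (c n) ∩ b ξ = Set.Iio (c n) ∩ b η) ∧
        Lim1Proof.nxt (b ξ) (c n) = Lim1Proof.nxt (b η) (c n) := by
      intro n
      induction n with
      | zero =>
        have h1 : c 0 ∈ b ξ := by rw [hc0]; exact (hKspec ξ).1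
        have h2 : c 0 ∈ b η := by rw [hc0, hKeq]; exact (hKspec η).1
        have h3 : M ξ < c 0 := by rw [hc0]; exact (hKspec ξ).2
        have h4 : M η < c 0 := by rw [hc0, hKeq]; exact (hKspec η).2
        have e1 := hcap ξ (c 0) h1 h3
        have e2 := hcap η (c 0) h2 h4
        obtain ⟨hpfx, hnxt⟩ := Lim1Proof.zcode_inj (e1.symm.trans e2)
        exact ⟨h1, h2, h3, h4, Lim1Proof.pfx_eq hpfx, hnxt⟩
      | succ m ih =>
        obtain ⟨i1, i2, i3, i4, i5, i6⟩ := ih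
        have h1 : c (m + 1) ∈ b ξ := by
          rw [hcs]; exact (Lim1Proof.nxt_spec (hb2 ξ) (c m)).1
        have hgt : c m < c (m + 1) := by
          rw [hcs]; exact (Lim1Proof.nxt_spec (hb2 ξ) (c m)).2
        have h2 : c (m + 1) ∈ b η := by
          rw [hcs, i6]; exact (Lim1Proof.nxt_spec (hb2 η) (c m)).1
        have h3 : M ξ < c (m + 1) := lt_trans i3 hgt
        have h4 : M η < c (m + 1) := lt_trans i4 hgt
        have e1 := hcap ξ (c (m + 1)) h1 h3
        have e2 := hcap η (c (m + 1)) h2 h4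
        obtain ⟨hpfx, hnxt⟩ := Lim1Proof.zcode_inj (e1.symm.trans e2)
        exact ⟨h1, h2, h3, h4, Lim1Proof.pfx_eq hpfx, hnxt⟩
    have hrec : ∀ k : ℕ, (k ∈ b ξ ∨ k ∈ b η) → K ξ ≤ k → ∃ n, c n = k := by
      intro k
      induction k using Nat.strong_induction_on with
      | _ k IH =>
        intro hk hk0
        rcases eq_or_lt_of_le hk0 with heq | hlt
        · exact ⟨0, by rw [hc0, ← heq]⟩
        · have hQne : {p | (p ∈ b ξ ∨ p ∈ b η) ∧ K ξ ≤ p ∧ p < k}.Nonempty :=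
            ⟨K ξ, Or.inl (hKspec ξ).1, le_refl _, hlt⟩
          have hQfin : {p | (p ∈ b ξ ∨ p ∈ b η) ∧ K ξ ≤ p ∧ p < k}.Finite :=
            (Set.finite_Iio k).subset fun p hp => hp.2.2
          set Q := {p | (p ∈ b ξ ∨ p ∈ b η) ∧ K ξ ≤ p ∧ p < k} with hQdef
          have hpmem : sSup Q ∈ Q := hQne.csSup_mem hQfin
          obtain ⟨n, hn⟩ := IH (sSup Q) hpmem.2.2 hpmem.1 hpmem.2.1
          refine ⟨n + 1, ?_⟩
          rw [hcs n, hn]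
          have hub : ∀ q ∈ Q, q ≤ sSup Q := fun q hq => le_csSup hQfin.bddAbove hq
          rcases hk with hkξ | hkη
          · have hle : Lim1Proof.nxt (b ξ) (sSup Q) ≤ k :=
              Lim1Proof.nxt_le hkξ hpmem.2.2
            have hmem := Lim1Proof.nxt_spec (hb2 ξ) (sSup Q)
            rcases lt_or_eq_of_le hle with hlt2 | heq2
            · exfalso
              have hQm : Lim1Proof.nxt (b ξ) (sSup Q) ∈ Q :=
                ⟨Or.inl hmem.1, hpmem.2.1.trans hmem.2.le, hlt2⟩
              exact absurd (hub _ hQm) (not_le.mpr hmem.2)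
            · exact heq2
          · have hle : Lim1Proof.nxt (b η) (sSup Q) ≤ k :=
              Lim1Proof.nxt_le hkη hpmem.2.2
            have hmemη := Lim1Proof.nxt_spec (hb2 η) (sSup Q)
            have heqn : Lim1Proof.nxt (b ξ) (sSup Q) = Lim1Proof.nxt (b η) (sSup Q) := by
              rw [← hn]; exact (main n).2.2.2.2.2
            rcases lt_or_eq_of_le hle with hlt2 | heq2
            · exfalso
              have hQm : Lim1Proof.nxt (b η) (sSup Q) ∈ Q :=
                ⟨Or.inr hmemη.1, hpmem.2.1.trans hmemη.2.le, hlt2⟩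
              exact absurd (hub _ hQm) (not_le.mpr hmemη.2)
            · rw [heqn]; exact heq2
    have hbeq : b ξ = b η := by
      ext k
      constructor
      · intro hk
        by_cases hk0 : K ξ ≤ k
        · obtain ⟨n, hn⟩ := hrec k (Or.inl hk) hk0
          rw [← hn]; exact (main n).2.1
        · have hk' : k ∈ Set.Iio (c 0) ∩ b ξ := ⟨by rw [hc0]; exact not_le.mp hk0, hk⟩
          rw [(main 0).2.2.2.2.1] at hk'
          exact hk'.2
      · intro hk
        by_cases hk0 : K ξ ≤ k
        · obtain ⟨n, hn⟩ := hrec k (Or.inr hk) hk0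
          rw [← hn]; exact (main n).1
        · have hk' : k ∈ Set.Iio (c 0) ∩ b η := ⟨by rw [hc0]; exact not_le.mp hk0, hk⟩
          rw [← (main 0).2.2.2.2.1] at hk'
          exact hk'.2
    rcases lt_or_gt_of_ne hξη with hlt | hgt
    · have hfin := hb3 η ξ hlt
      rw [← hbeq] at hfin
      rw [Set.inter_eq_left.mpr (hb1 ξ)] at hfin
      exact (hb2 ξ) hfin
    · have hfin := hb3 ξ η hgt
      rw [hbeq] at hfin
      rw [Set.inter_eq_left.mpr (hb1 η)] at hfin
      exact (hb2 η) hfin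
end

section
/- Assume 2^{ℵ_0} < 2^{ℵ_1}. Let {b_ξ : ξ < ω_1} be an almost disjoint family of infinite subsets of ω. Then there exists h : ω_1 → ℤ_2 such that no f : ω → ℤ_2 satisfies: f is eventually constant with value h(ξ) on b_ξ for every ξ < ω_1. (Hence the family of constant functions g^h_ξ ≡ h(ξ) on b_ξ is nontrivializable.) -/
theorem mk_Omega1 : Cardinal.mk Omega1 = Cardinal.lift.{1,0} (Cardinal.aleph 1) := by
  show Cardinal.mk ↥(Set.Iio (Cardinal.aleph 1).ord) = _
  rw [Ordinal.mk_Iio_ordinal, Cardinal.card_ord]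

/-!
Statement 9: Assume `2^{ℵ₀} < 2^{ℵ₁}`.  Let `{b_ξ : ξ < ω₁}` be an almost disjoint
family of infinite subsets of `ω`.  Then there exists `h : ω₁ → ℤ₂` such that no
`f : ℕ → ℤ₂` satisfies: `f` is eventually constant with value `h(ξ)` on `b_ξ` for
every `ξ < ω₁`.  (Hence the family of constant functions `g^h_ξ ≡ h(ξ)` on `b_ξ` is
nontrivializable.)
-/
theorem exists_nontrivializable_constant_family
    (hch : (2 : Cardinal) ^ Cardinal.aleph0 < (2 : Cardinal) ^ Cardinal.aleph 1)
    (b : Omega1 → Set ℕ)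
    (hinf : ∀ ξ, (b ξ).Infinite)
    (had : ∀ ξ η : Omega1, ξ ≠ η → (b ξ ∩ b η).Finite) :
    ∃ h : Omega1 → ZMod 2,
      ¬ ∃ f : ℕ → ZMod 2, ∀ ξ : Omega1, {k | k ∈ b ξ ∧ f k ≠ h ξ}.Finite := by
  by_contra h0
  push_neg at h0
  choose F hF using h0
  -- F is injective
  have hinj : Function.Injective (fun h => (ULift.up.{1} (F h) : ULift.{1} (ℕ → ZMod 2))) := by
    intro h1 h2 hEq
    have hEq' : F h1 = F h2 := congrArg ULift.down hEq
    funext ξ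
    by_contra hne
    have hfin : (b ξ).Finite := by
      have := (hF h1 ξ).union (hF h2 ξ)
      refine this.subset ?_
      intro k hk
      by_cases hc : F h1 k = h1 ξ
      · right
        refine ⟨hk, ?_⟩
        rw [← hEq', hc]
        exact hne
      · left; exact ⟨hk, hc⟩
    exact hinf ξ hfin
  have hle : Cardinal.mk (Omega1 → ZMod 2) ≤ Cardinal.mk (ULift.{1} (ℕ → ZMod 2)) :=
    Cardinal.mk_le_of_injective hinj
  rw [Cardinal.mk_uLift] at hle
  have h1 : Cardinal.mk (Omega1 → ZMod 2) = (2 : Cardinal) ^ Cardinal.lift.{1,0} (Cardinal.aleph 1) := by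
    rw [Cardinal.mk_arrow, mk_Omega1]
    norm_num [Cardinal.mk_fintype]
  have h2 : Cardinal.mk (ℕ → ZMod 2) = (2 : Cardinal) ^ Cardinal.aleph0 := by
    rw [Cardinal.mk_arrow]
    norm_num [Cardinal.mk_fintype, Cardinal.mk_nat]
  rw [h1, h2] at hle
  rw [show (2 : Cardinal.{1}) ^ Cardinal.lift.{1,0} (Cardinal.aleph 1)
        = Cardinal.lift.{1,0} ((2 : Cardinal) ^ Cardinal.aleph 1) by
      rw [Cardinal.lift_power, Cardinal.lift_two]] at hle
  have h3 : (2 : Cardinal.{0}) ^ Cardinal.aleph 1 ≤ (2 : Cardinal) ^ Cardinal.aleph0 :=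
    Cardinal.lift_le.mp hle
  have h4 := Cardinal.lift_le.{_}.mpr h3
  rw [Cardinal.lift_power, Cardinal.lift_power, Cardinal.lift_two, Cardinal.lift_aleph0,
    Cardinal.lift_aleph, Ordinal.lift_one] at h4
  exact absurd h4 (not_le.mpr hch)
end

section
/- Let {a_ξ : ξ < ω_1} be a tower on ω (a_ξ ⊂_* a_η for ξ < η). Then there exist orderings <_n on ω_1 for n < ω such that: (1) each (ω_1, <_n) is a tree ordering of height at most ω; (2) <_m ⊆ <_n for m < n; (3) for all α < β < ω_1 there is n with α <_n β; (4) if α <_n β then a_α ∖ n ⊆ a_β; (5) if α is a limit ordinal and α <_n β then α+1 ≤_n β. -/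
/-!
For every `n` the relation `α <_n β` is encoded as `α ∈ towerTree a β n`, and the finite sets
`towerTree a β n` are built by recursion on `β`. The invariant that makes each `<_n` a tree is
coherence: if `α <_n β`, the `<_n`-predecessors of `α` are exactly the `<_n`-predecessors of `β`
below `α`.

At a successor `β = α + 1` the predecessors of `β` at every level `n ≥ m` are `α` and those of `α`,
where `a α \ m ⊆ a β`. At a limit `β` pick a cofinal sequence `c₀ < c₁ < ⋯` of successor ordinals
(`β` is countable) and levels `N₀ < N₁ < ⋯` with `c k <_{N (k+1)} c (k+1)` and
`a (c k) \ N k ⊆ a β`; at level `n` the predecessors of `β` are `c k` and those of `c k`, for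
the largest `k` with `N k ≤ n`. As only successors are ever appended on top of a chain, a limit
`α <_n β` is always followed by `α + 1 ≤_n β`.
-/

open Set Order

theorem exists_sdiff_Iio_subset {s t : Set ℕ} (h : (s \ t).Finite) : ∃ m, s \ Iio m ⊆ t := by
  obtain ⟨b, hb⟩ := h.bddAbove
  exact ⟨b + 1, fun k ⟨hks, hkm⟩ =>
    by_contra fun hkt => hkm (Nat.lt_succ_of_le (hb ⟨hks, hkt⟩))⟩

theorem exists_strictMono_ge (M : ℕ → ℕ) : ∃ N : ℕ → ℕ, StrictMono N ∧ M ≤ N := by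
  refine ⟨fun k => ∑ i ∈ Finset.range (k + 1), (M i + 1),
    strictMono_nat_of_lt_succ fun k => ?_, fun k => ?_⟩
  · rw [Finset.sum_range_succ _ (k + 1)]
    omega
  · exact (Nat.le_succ _).trans
      (Finset.single_le_sum (f := fun i => M i + 1) (fun _ _ => Nat.zero_le _)
        (Finset.self_mem_range_succ k))

section TowerTree

variable {ι : Type*} [LinearOrder ι] (a : ι → Set ℕ)

/-- `S` is a possible set of `<_n`-predecessors of `β`, given the predecessor sets `F α n`. -/
structure IsPredLevel (F : ι → ℕ → Set ι) (β : ι) (n : ℕ) (S : Set ι) : Prop where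
  subset_Iio : S ⊆ Iio β
  finite : S.Finite
  coherent : ∀ α ∈ S, F α n = S ∩ Iio α
  sdiff_subset : ∀ α ∈ S, a α \ Iio n ⊆ a β
  covBy_mem : ∀ α ∈ S, IsSuccLimit α → ∀ α', α ⋖ α' → α' = β ∨ α' ∈ S

structure IsPredSystem (F : ι → ℕ → Set ι) (β : ι) (P : ℕ → Set ι) : Prop where
  level : ∀ n, IsPredLevel a F β n (P n)
  mono : Monotone P
  cover : ∀ γ < β, ∃ n, γ ∈ P n

variable {a} {F G : ι → ℕ → Set ι} {β c : ι} {n : ℕ}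

theorem IsPredLevel.congr {S : Set ι} (h : IsPredLevel a F β n S)
    (hFG : ∀ γ < β, F γ = G γ) : IsPredLevel a G β n S :=
  { h with coherent := fun α hα => hFG α (h.subset_Iio hα) ▸ h.coherent α hα }

theorem IsPredSystem.congr {P : ℕ → Set ι} (h : IsPredSystem a F β P)
    (hFG : ∀ γ < β, F γ = G γ) : IsPredSystem a G β P :=
  { h with level := fun n => (h.level n).congr hFG }

theorem isPredLevel_empty : IsPredLevel a F β n ∅ where
  subset_Iio := empty_subset _
  finite := finite_empty
  coherent := by simp
  sdiff_subset := by simp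
  covBy_mem := by simp

theorem isPredSystem_of_isMin (hβ : IsMin β) : IsPredSystem a F β fun _ => ∅ where
  level _ := isPredLevel_empty
  mono := monotone_const
  cover _ hγ := (hβ.not_lt hγ).elim

theorem IsPredSystem.insert_subset_insert {b : ι} (hc : IsPredSystem a F c (F c))
    (hb : b ∈ insert c (F c n)) : insert b (F b n) ⊆ insert c (F c n) := by
  rcases hb with rfl | hb
  · rfl
  · rw [(hc.level n).coherent b hb]
    exact insert_subset (mem_insert_of_mem _ hb) (inter_subset_left.trans (subset_insert _ _))

theorem IsPredSystem.isPredLevel_insert (hc : IsPredSystem a F c (F c)) (hcβ : c < β)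
    (hlim : ¬IsSuccLimit c ∨ c ⋖ β) (ha : a c \ Iio n ⊆ a β) :
    IsPredLevel a F β n (insert c (F c n)) where
  subset_Iio := insert_subset hcβ (((hc.level n).subset_Iio).trans (Iio_subset_Iio hcβ.le))
  finite := (hc.level n).finite.insert c
  coherent := by
    rintro α (rfl | hα)
    · rw [insert_inter_of_notMem (self_notMem_Iio (a := α)),
        inter_eq_left.2 (hc.level n).subset_Iio]
    · rw [insert_inter_of_notMem (show c ∉ Iio α from ((hc.level n).subset_Iio hα).not_gt)]
      exact (hc.level n).coherent α hα
  sdiff_subset := by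
    rintro α (rfl | hα)
    · exact ha
    · exact fun k hk => ha ⟨(hc.level n).sdiff_subset α hα hk, hk.2⟩
  covBy_mem := by
    rintro α (rfl | hα) hαlim α' hαα'
    · exact .inl (hαα'.unique_right (hlim.resolve_left (not_not.2 hαlim)))
    · exact .inr ((hc.level n).covBy_mem α hα hαlim α' hαα')

theorem IsPredLevel.mem_of_mem_of_mem {S : Set ι} {α γ : ι} (hS : IsPredLevel a F β n S)
    (hγ : γ ∈ S) (hα : α ∈ F γ n) : α ∈ S :=
  (hS.coherent γ hγ ▸ hα).1

theorem IsPredLevel.eq_or_mem_or_mem {S : Set ι} {γ γ' : ι} (hS : IsPredLevel a F β n S)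
    (hγ : γ ∈ S) (hγ' : γ' ∈ S) : γ = γ' ∨ γ ∈ F γ' n ∨ γ' ∈ F γ n := by
  rcases lt_trichotomy γ γ' with h | rfl | h
  · exact .inr (.inl (hS.coherent γ' hγ' ▸ ⟨hγ, h⟩))
  · exact .inl rfl
  · exact .inr (.inr (hS.coherent γ hγ ▸ ⟨hγ', h⟩))

theorem exists_isPredSystem_of_seq (hF : ∀ γ < β, IsPredSystem a F γ (F γ)) {c : ℕ → ι}
    {N : ℕ → ℕ} (hN : StrictMono N) (hcβ : ∀ k, c k < β)
    (hlim : ∀ k, ¬IsSuccLimit (c k) ∨ c k ⋖ β) (ha : ∀ k, a (c k) \ Iio (N k) ⊆ a β)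
    (hchain : ∀ k, c k ∈ insert (c (k + 1)) (F (c (k + 1)) (N (k + 1))))
    (hcof : ∀ γ < β, ∃ k, γ ≤ c k) : ∃ P, IsPredSystem a F β P := by
  have hc (k : ℕ) : IsPredSystem a F (c k) (F (c k)) := hF _ (hcβ k)
  set K : ℕ → ℕ := fun n => Nat.findGreatest (N · ≤ n) n
  have hNK {n : ℕ} (hn : N 0 ≤ n) : N (K n) ≤ n :=
    Nat.findGreatest_spec (P := (N · ≤ n)) (Nat.zero_le _) hn
  have hle_K {k n : ℕ} (h : N k ≤ n) : k ≤ K n :=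
    Nat.le_findGreatest (P := (N · ≤ n)) ((hN.id_le k).trans h) h
  have hdir {j k n : ℕ} (hjk : j ≤ k) (hkn : N k ≤ n) :
      insert (c j) (F (c j) n) ⊆ insert (c k) (F (c k) n) := by
    induction k, hjk using Nat.le_induction with
    | base => rfl
    | succ k hjk ih =>
      exact (ih ((hN.monotone k.le_succ).trans hkn)).trans
        ((hc _).insert_subset_insert (insert_subset_insert ((hc _).mono hkn) (hchain k)))
  refine ⟨fun n => if N 0 ≤ n then insert (c (K n)) (F (c (K n)) n) else ∅,
    fun n => ?_, fun m n hmn => ?_, fun γ hγ => ?_⟩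
  · split_ifs with hn
    · exact (hc _).isPredLevel_insert (hcβ _) (hlim _)
        ((sdiff_subset_sdiff_right (Iio_subset_Iio (hNK hn))).trans (ha _))
    · exact isPredLevel_empty
  · split_ifs with hm hn hn
    · exact (insert_subset_insert ((hc _).mono hmn)).trans
        (hdir (hle_K ((hNK hm).trans hmn)) (hNK hn))
    · exact absurd (hm.trans hmn) hn
    · exact empty_subset _
    · exact empty_subset _
  · obtain ⟨k, hk⟩ := hcof γ hγ
    obtain ⟨n₀, hn₀⟩ : ∃ n, γ ∈ insert (c k) (F (c k) n) := by
      rcases hk.eq_or_lt with rfl | hlt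
      · exact ⟨0, mem_insert _ _⟩
      · exact ((hc k).cover γ hlt).imp fun _ => mem_insert_of_mem _
    set n := max n₀ (N k)
    have hkn : N k ≤ n := le_max_right _ _
    have h0n : N 0 ≤ n := (hN.monotone (Nat.zero_le k)).trans hkn
    refine ⟨n, ?_⟩
    rw [if_pos h0n]
    exact hdir (hle_K hkn) (hNK h0n) (insert_subset_insert ((hc k).mono (le_max_left _ _)) hn₀)

theorem Order.IsSuccLimit.exists_seq_cofinal_not_isSuccLimit [WellFoundedLT ι] (hβ : IsSuccLimit β)
    (hcount : (Iio β).Countable) :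
    ∃ c : ℕ → ι, (∀ k, c k < c (k + 1)) ∧ (∀ k, c k < β) ∧ (∀ k, ¬IsSuccLimit (c k)) ∧
      ∀ γ < β, ∃ k, γ ≤ c k := by
  let := SuccOrder.ofLinearWellFoundedLT ι
  obtain ⟨e, he⟩ := hcount.exists_eq_range (not_isMin_iff.1 hβ.not_isMin)
  have heβ (k : ℕ) : e k < β := he.symm.subset (mem_range_self k)
  let x : ℕ → ι := fun k => Nat.rec (e 0) (fun k y => max (succ y) (e (k + 1))) k
  have hxβ (k : ℕ) : x k < β := by
    induction k with
    | zero => exact heβ 0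
    | succ k ih => exact max_lt (hβ.succ_lt ih) (heβ (k + 1))
  have hx_max (k : ℕ) : ¬IsMax (x k) := not_isMax_of_lt (hxβ k)
  refine ⟨fun k => succ (x k), fun k => ?_, fun k => hβ.succ_lt (hxβ k),
    fun k h => hx_max k h.isMax, fun γ hγ => ?_⟩
  · show succ (x k) < succ (x (k + 1))
    exact (le_max_left _ _ : succ (x k) ≤ x (k + 1)).trans_lt
      (lt_succ_of_not_isMax (hx_max (k + 1)))
  · obtain ⟨k, rfl⟩ := he.subset hγ
    refine ⟨k, le_trans ?_ (le_succ (x k))⟩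
    cases k with
    | zero => exact le_rfl
    | succ k => exact le_max_right _ _

theorem exists_isPredSystem [WellFoundedLT ι]
    (htower : ∀ ξ η, ξ < η → (a ξ \ a η).Finite) (hcount : (Iio β).Countable)
    (hF : ∀ γ < β, IsPredSystem a F γ (F γ)) : ∃ P, IsPredSystem a F β P := by
  by_cases hmin : IsMin β
  · exact ⟨_, isPredSystem_of_isMin hmin⟩
  by_cases hsucc : ∃ α, α ⋖ β
  · obtain ⟨α, hαβ⟩ := hsucc
    obtain ⟨m, hm⟩ := exists_sdiff_Iio_subset (htower α β hαβ.lt)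
    exact exists_isPredSystem_of_seq hF (c := fun _ => α) (strictMono_id.const_add m)
      (fun _ => hαβ.lt) (fun _ => .inr hαβ)
      (fun _ => (sdiff_subset_sdiff_right (Iio_subset_Iio (Nat.le_add_right m _))).trans hm)
      (fun _ => mem_insert _ _) (fun _ hγ => ⟨0, hαβ.le_of_lt hγ⟩)
  have hβ : IsSuccLimit β := ⟨hmin, fun α hα => hsucc ⟨α, hα⟩⟩
  obtain ⟨c, hc_lt, hcβ, hc_lim, hcof⟩ := hβ.exists_seq_cofinal_not_isSuccLimit hcount
  choose m₁ hm₁ using fun k => exists_sdiff_Iio_subset (htower _ _ (hcβ k))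
  choose m₂ hm₂ using fun k => (hF _ (hcβ (k + 1))).cover _ (hc_lt k)
  obtain ⟨N, hN, hMN⟩ := exists_strictMono_ge fun k => max (m₁ k) (m₂ k)
  refine exists_isPredSystem_of_seq hF hN hcβ (fun k => .inl (hc_lim k)) (fun k => ?_)
    (fun k => mem_insert_of_mem _ ((hF _ (hcβ (k + 1))).mono ?_ (hm₂ k))) hcof
  · exact (sdiff_subset_sdiff_right (Iio_subset_Iio ((le_max_left _ _).trans (hMN k)))).trans
      (hm₁ k)
  · exact (le_max_right _ _).trans ((hMN k).trans (hN.monotone k.le_succ))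

variable (a) in
/-- `IsPredSystem a F β` only reads `F` below `β` (`IsPredSystem.congr`), so padding the
function with `∅` from `β` on is harmless. -/
noncomputable def towerTree [WellFoundedLT ι] : ι → ℕ → Set ι :=
  wellFounded_lt.fix fun β G =>
    Classical.epsilon (IsPredSystem a (fun γ => if h : γ < β then G γ h else fun _ => ∅) β)

theorem isPredSystem_towerTree [WellFoundedLT ι]
    (htower : ∀ ξ η, ξ < η → (a ξ \ a η).Finite) (hcount : ∀ β : ι, (Iio β).Countable) (β : ι) :
    IsPredSystem a (towerTree a) β (towerTree a β) := by
  induction β using WellFoundedLT.induction with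
  | _ β ih =>
    let F : ι → ℕ → Set ι := fun γ => if γ < β then towerTree a γ else fun _ => ∅
    have hres : ∀ γ < β, F γ = towerTree a γ := fun γ hγ => if_pos hγ
    have hβ : towerTree a β = Classical.epsilon (IsPredSystem a F β) :=
      wellFounded_lt.fix_eq _ β
    have hex : ∃ P, IsPredSystem a F β P := (exists_isPredSystem htower (hcount β) ih).imp
      fun P hP => hP.congr fun γ hγ => (hres γ hγ).symm
    rw [hβ]
    exact (Classical.epsilon_spec hex).congr hres

end TowerTree

namespace Omega1

instance : WellFoundedLT Omega1 :=
  inferInstanceAs (WellFoundedLT (Set.Iio (Cardinal.aleph 1).ord))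

theorem countable_Iio (β : Omega1) : (Iio β).Countable := by
  have h : (Iio β.1).Countable := by
    rw [← Cardinal.le_aleph0_iff_set_countable, Cardinal.mk_Iio_ordinal, Cardinal.lift_le_aleph0,
      ← Cardinal.lt_aleph_one_iff, ← Cardinal.lt_ord]
    exact β.2
  exact h.preimage Subtype.val_injective

theorem covBy_of_val_eq_add_one {α α' : Omega1} (h : α'.1 = α.1 + 1) : α ⋖ α' :=
  CovBy.of_image (OrderEmbedding.subtype _) (by
    change α.1 ⋖ α'.1
    rw [h, ← succ_eq_add_one]
    exact covBy_succ _)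

theorem isSuccLimit_of_val {α : Omega1} (h : IsSuccLimit α.1) : IsSuccLimit α := by
  refine ⟨fun hmin => h.not_isMin fun b hb => ?_, fun b hb => h.2 b.1 ?_⟩
  · exact hmin (b := ⟨b, hb.trans_lt α.2⟩) hb
  · refine ((OrdConnected.apply_covBy_apply_iff (OrderEmbedding.subtype _)) ?_).2 hb
    change (range (Subtype.val : Iio (Cardinal.aleph 1).ord → Ordinal)).OrdConnected
    rw [Subtype.range_coe]
    exact ordConnected_Iio

end Omega1

theorem exists_tree_orderings_general
    (a : Omega1 → Set ℕ)
    (htower : ∀ ξ η : Omega1, ξ < η → (a ξ \ a η).Finite ∧ (a η \ a ξ).Infinite) :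
    ∃ r : ℕ → Omega1 → Omega1 → Prop,
      (∀ n, (∀ α, ¬ r n α α) ∧
        (∀ α β γ, r n α β → r n β γ → r n α γ) ∧
        (∀ β, {γ | r n γ β}.Finite) ∧
        (∀ β γ γ', r n γ β → r n γ' β → γ = γ' ∨ r n γ γ' ∨ r n γ' γ)) ∧
      (∀ m n α β, m < n → r m α β → r n α β) ∧
      (∀ α β : Omega1, α < β → ∃ n, r n α β) ∧
      (∀ n α β, r n α β → ∀ k ∈ a α, n ≤ k → k ∈ a β) ∧
      (∀ n α β, Order.IsSuccLimit α.1 → r n α β →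
        ∀ α' : Omega1, α'.1 = α.1 + 1 → (α' = β ∨ r n α' β)) := by
  have hT := isPredSystem_towerTree (fun ξ η h => (htower ξ η h).1) Omega1.countable_Iio
  refine ⟨fun n α β => α ∈ towerTree a β n,
    fun n => ⟨fun α h => ?_, fun α β γ hαβ hβγ => ?_, fun β => ((hT β).level n).finite,
      fun β γ γ' hγ hγ' => ((hT β).level n).eq_or_mem_or_mem hγ hγ'⟩,
    fun m n α β hmn h => (hT β).mono hmn.le h, fun α β h => (hT β).cover α h,
    fun n α β h k hk hnk => ((hT β).level n).sdiff_subset α h ⟨hk, not_lt.2 hnk⟩,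
    fun n α β hα h α' hα' => ?_⟩
  · exact lt_irrefl α (((hT α).level n).subset_Iio h)
  · exact ((hT γ).level n).mem_of_mem_of_mem hβγ hαβ
  · exact ((hT β).level n).covBy_mem α h (Omega1.isSuccLimit_of_val hα) α'
      (Omega1.covBy_of_val_eq_add_one hα')

theorem exists_tree_orderings
    (a : Omega1 → Set ℕ)
    (hinf : ∀ ξ, (a ξ).Infinite)
    (htower : ∀ ξ η : Omega1, ξ < η → (a ξ \ a η).Finite ∧ (a η \ a ξ).Infinite) :
    ∃ r : ℕ → Omega1 → Omega1 → Prop,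
      (∀ n, (∀ α, ¬ r n α α) ∧
        (∀ α β γ, r n α β → r n β γ → r n α γ) ∧
        (∀ β, {γ | r n γ β}.Finite) ∧
        (∀ β γ γ', r n γ β → r n γ' β → γ = γ' ∨ r n γ γ' ∨ r n γ' γ)) ∧
      (∀ m n α β, m < n → r m α β → r n α β) ∧
      (∀ α β : Omega1, α < β → ∃ n, r n α β) ∧
      (∀ n α β, r n α β → ∀ k ∈ a α, n ≤ k → k ∈ a β) ∧
      (∀ n α β, Order.IsSuccLimit α.1 → r n α β →
        ∀ α' : Omega1, α'.1 = α.1 + 1 → (α' = β ∨ r n α' β)) :=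
  exists_tree_orderings_general a htower
end

section
/- Let κ be an uncountable regular cardinal, P a κ-cc forcing poset, and Q a κ-closed forcing poset. For any condition (p,q) ∈ P × Q and any P×Q-name τ for an ordinal, there exist r ≤ q in Q and a P-name σ for an ordinal such that (p,r) forces τ = σ. -/
/-!
Build greedily, by transfinite recursion, conditions `(pξ, qξ) ≤ (p, q)` deciding `τ`, with
the `pξ` pairwise incompatible and the `qξ` decreasing, for as long as possible. By the
`κ`-cc the construction stops at some `δ < κ`; by `κ`-closure the `qξ`, `ξ < δ`, have a lower
bound `r`. Since no further step is possible, every `p' ≤ p` is compatible with some `pξ`, so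
the conditions `p'` for which `(p', r)` decides `τ` are dense below `p`, and the value decided
there is the `P`-name `σ`.
-/

open Cardinal Set

universe u v

theorem Ordinal.exists_greedy_seq {X : Type v} [Nonempty X] (B : X → Prop) (R : X → X → Prop) :
    ∃ g : Ordinal.{u} → X, ∀ ξ, (∃ x, B x ∧ ∀ η < ξ, R (g η) x) →
      B (g ξ) ∧ ∀ η < ξ, R (g η) (g ξ) := by
  classical
  let step (ξ : Ordinal.{u}) (g : ∀ η < ξ, X) : X :=
    if h : ∃ x, B x ∧ ∀ η (hη : η < ξ), R (g η hη) x then h.choose else Classical.arbitrary X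
  refine ⟨WellFoundedLT.fix step, fun ξ h => ?_⟩
  rw [WellFoundedLT.fix_eq]
  dsimp only [step]
  rw [dif_pos h]
  exact h.choose_spec

def Compatible {P : Type u} [Preorder P] (a b : P) : Prop := ∃ c, c ≤ a ∧ c ≤ b

theorem Compatible.symm {P : Type u} [Preorder P] {a b : P} (h : Compatible a b) :
    Compatible b a :=
  let ⟨c, hca, hcb⟩ := h; ⟨c, hcb, hca⟩

theorem Ordinal.card_lt_of_incompatible_seq {P : Type u} [Preorder P] {κ : Cardinal.{u}}
    (hcc : ∀ A : Set P, A.Pairwise (fun a b => ¬ Compatible a b) → #A < κ)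
    {o : Ordinal.{u}} (f : Ordinal.{u} → P)
    (hf : ∀ ξ < o, ∀ η < ξ, ¬ Compatible (f ξ) (f η)) : o.card < κ := by
  have hanti : (Iio o).Pairwise fun η ξ => ¬ Compatible (f η) (f ξ) := by
    intro η hη ξ hξ hne
    rcases hne.lt_or_gt with h | h
    · exact fun hc => hf ξ hξ η h hc.symm
    · exact hf η hη ξ h
  have hinj : InjOn f (Iio o) := fun η hη ξ hξ heq =>
    by_contra fun hne => hanti hη hξ hne ⟨f η, le_rfl, heq.le⟩
  have hcard := hcc _ ((hinj.pairwise_image).mpr hanti)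
  have hlift := mk_image_eq_of_injOn_lift f _ hinj
  rw [Cardinal.mk_Iio_ordinal, Cardinal.lift_lift] at hlift
  exact Cardinal.lift_lt.mp (hlift ▸ Cardinal.lift_lt.mpr hcard)

variable {P Q : Type u} [Preorder P] [Preorder Q]

theorem exists_le_dense_slice {κ : Cardinal.{u}}
    (hcc : ∀ A : Set P, A.Pairwise (fun a b => ¬ Compatible a b) → #A < κ)
    (hclosed : ∀ β : Ordinal.{u}, β.card < κ → ∀ f : Iio β → Q,
      (∀ i j : Iio β, i ≤ j → f j ≤ f i) → ∃ r : Q, ∀ i, r ≤ f i)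
    {p : P} {q : Q} {E : Set (P × Q)} (hE : IsLowerSet E)
    (hdense : ∀ x ≤ (p, q), ∃ y ≤ x, y ∈ E) :
    ∃ r ≤ q, ∀ p₁ ≤ p, ∃ p₂ ≤ p₁, (p₂, r) ∈ E := by
  have : Nonempty (P × Q) := ⟨(p, q)⟩
  obtain ⟨g, hg⟩ := Ordinal.exists_greedy_seq.{u}
    (fun x : P × Q => x ≤ (p, q) ∧ x ∈ E) (fun y x => ¬ Compatible x.1 y.1 ∧ x.2 ≤ y.2)
  set Active : Ordinal.{u} → Prop := fun ξ =>
    ∃ x : P × Q, (x ≤ (p, q) ∧ x ∈ E) ∧ ∀ η < ξ, ¬ Compatible x.1 (g η).1 ∧ x.2 ≤ (g η).2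
  have hstop : ∃ δ < κ.ord, ¬ Active δ := by
    by_contra! h
    have := Ordinal.card_lt_of_incompatible_seq hcc (o := κ.ord) (fun ξ => (g ξ).1)
      fun ξ hξ η hη => ((hg ξ (h ξ hξ)).2 η hη).1
    exact (card_ord κ).not_lt this
  obtain ⟨δ, ⟨hδκ, hδ⟩, hmin⟩ :=
    WellFounded.has_min Ordinal.lt_wf {δ | δ < κ.ord ∧ ¬ Active δ} hstop
  have hactive : ∀ η < δ, Active η := fun η hη =>
    by_contra fun h => hmin η ⟨hη.trans hδκ, h⟩ hη
  have hδ0 : 0 < δ := by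
    refine pos_iff_ne_zero.mpr fun h0 => hδ (h0 ▸ ?_)
    obtain ⟨y, hy, hyE⟩ := hdense (p, q) le_rfl
    exact ⟨y, ⟨hy, hyE⟩, fun η hη => (not_lt_zero hη).elim⟩
  obtain ⟨r, hr⟩ := hclosed δ (lt_ord.mp hδκ) (fun i => (g i).2) fun i j hij =>
    hij.lt_or_eq.elim (fun h => ((hg j (hactive j j.2)).2 i h).2) (fun h => h ▸ le_rfl)
  have hrq : r ≤ q := (hr ⟨0, hδ0⟩).trans (hg 0 (hactive 0 hδ0)).1.1.2
  refine ⟨r, hrq, fun p₁ hp₁ => ?_⟩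
  obtain ⟨y, hy, hyE⟩ := hdense (p₁, r) ⟨hp₁, hrq⟩
  -- otherwise `y` would continue the construction at stage `δ`
  have hcompat : ∃ η < δ, Compatible y.1 (g η).1 := by
    by_contra! h
    exact hδ ⟨y, ⟨hy.trans ⟨hp₁, hrq⟩, hyE⟩, fun η hη => ⟨h η hη, hy.2.trans (hr ⟨η, hη⟩)⟩⟩
  obtain ⟨η, hη, c, hcy, hcg⟩ := hcompat
  have hcr : (c, r) ≤ g η := ⟨hcg, hr ⟨η, hη⟩⟩
  exact ⟨c, hcy.trans hy.1, hE hcr (hg η (hactive η hη)).1.2⟩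

theorem exhaustion_general
    (κ : Cardinal.{0})
    (P : Type) [Preorder P] (Q : Type) [Preorder Q]
    (hcc : ∀ A : Set P, (∀ a ∈ A, ∀ b ∈ A, a ≠ b → ¬ ∃ c, c ≤ a ∧ c ≤ b) →
      Cardinal.mk A < κ)
    (hclosed : ∀ β : Ordinal.{0}, β.card < κ → ∀ f : ↥(Set.Iio β) → Q,
      (∀ i j : ↥(Set.Iio β), i ≤ j → f j ≤ f i) → ∃ r : Q, ∀ i, r ≤ f i)
    (p : P) (q : Q)
    (D : P × Q → Ordinal.{0} → Prop)
    (hDdown : ∀ r r' : P × Q, r' ≤ r → ∀ α, D r α → D r' α)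
    (hDcoh : ∀ r r' : P × Q, ∀ α α', D r α → D r' α' →
      (∃ s, s ≤ r ∧ s ≤ r') → α = α')
    (hDdense : ∀ r : P × Q, r ≤ (p, q) → ∃ r', r' ≤ r ∧ ∃ α, D r' α) :
    ∃ r : Q, r ≤ q ∧ ∃ σ : P → Ordinal.{0} → Prop,
      (∀ p₁ p₂ : P, p₂ ≤ p₁ → ∀ α, σ p₁ α → σ p₂ α) ∧
      (∀ p₁ p₂ : P, ∀ α α', σ p₁ α → σ p₂ α' → (∃ s, s ≤ p₁ ∧ s ≤ p₂) → α = α') ∧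
      (∀ p₁, p₁ ≤ p → ∃ p₂, p₂ ≤ p₁ ∧ ∃ α, σ p₂ α) ∧
      (∀ p₁, p₁ ≤ p → ∀ α, σ p₁ α → D (p₁, r) α) := by
  obtain ⟨r, hrq, hr⟩ := exists_le_dense_slice hcc hclosed (E := {x | ∃ α, D x α})
    (fun x y hyx ⟨α, hα⟩ => ⟨α, hDdown x y hyx α hα⟩) hDdense
  refine ⟨r, hrq, fun p' α => D (p', r) α, ?_, ?_, hr, fun _ _ _ hα => hα⟩
  · exact fun p₁ p₂ h α => hDdown (p₁, r) (p₂, r) ⟨h, le_rfl⟩ α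
  · rintro p₁ p₂ α α' hα hα' ⟨s, hs₁, hs₂⟩
    exact hDcoh _ _ α α' hα hα' ⟨(s, r), ⟨hs₁, le_rfl⟩, hs₂, le_rfl⟩

theorem exhaustion
    (κ : Cardinal.{0}) (hκ : Cardinal.aleph0 < κ) (hreg : κ.IsRegular)
    (P : Type) [Preorder P] (Q : Type) [Preorder Q]
    (hcc : ∀ A : Set P, (∀ a ∈ A, ∀ b ∈ A, a ≠ b → ¬ ∃ c, c ≤ a ∧ c ≤ b) →
      Cardinal.mk A < κ)
    (hclosed : ∀ β : Ordinal.{0}, β.card < κ → ∀ f : ↥(Set.Iio β) → Q,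
      (∀ i j : ↥(Set.Iio β), i ≤ j → f j ≤ f i) → ∃ r : Q, ∀ i, r ≤ f i)
    (p : P) (q : Q)
    (D : P × Q → Ordinal.{0} → Prop)
    (hDdown : ∀ r r' : P × Q, r' ≤ r → ∀ α, D r α → D r' α)
    (hDcoh : ∀ r r' : P × Q, ∀ α α', D r α → D r' α' →
      (∃ s, s ≤ r ∧ s ≤ r') → α = α')
    (hDdense : ∀ r : P × Q, r ≤ (p, q) → ∃ r', r' ≤ r ∧ ∃ α, D r' α) :
    ∃ r : Q, r ≤ q ∧ ∃ σ : P → Ordinal.{0} → Prop,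
      (∀ p₁ p₂ : P, p₂ ≤ p₁ → ∀ α, σ p₁ α → σ p₂ α) ∧
      (∀ p₁ p₂ : P, ∀ α α', σ p₁ α → σ p₂ α' → (∃ s, s ≤ p₁ ∧ s ≤ p₂) → α = α') ∧
      (∀ p₁, p₁ ≤ p → ∃ p₂, p₂ ≤ p₁ ∧ ∃ α, σ p₂ α) ∧
      (∀ p₁, p₁ ≤ p → ∀ α, σ p₁ α → D (p₁, r) α) :=
  exhaustion_general κ P Q hcc hclosed p q D hDdown hDcoh hDdense
end
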